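/- arXiv:2509.03892 — 9 statements merged into one kernel-verified Lean document; each statement's English description precedes it below -/
import Mathlib

section
/- Let k ≥ 1 and let d_1, …, d_k be nonnegative integers. Let F be the family of all functions ℝ^k → ℝ given by real polynomials in k variables in which the i-th variable appears with degree at most d_i. Then opt_std(F) = ∏_{i=1}^k (d_i + 1): some deterministic learner makes at most ∏_{i=1}^k (d_i + 1) mistakes for every hidden f ∈ F and every finite input sequence, and for every deterministic learner there exist f ∈ F and a finite input sequence forcing at least ∏_{i=1}^k (d_i + 1) mistakes. -/
/- Number of mistakes made by a deterministic learner `L` in the standard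
(strong-feedback) online model, with hidden function `f`, starting from a given
history of past (input, correct output) pairs, on a finite input sequence. -/
open Classical in
noncomputable def stdMistakes {X Y : Type*} (L : List (X × Y) → X → Y) (f : X → Y) :
    List (X × Y) → List X → ℕ
  | _, [] => 0
  | hist, x :: xs =>
      (if L hist x = f x then 0 else 1) + stdMistakes L f (hist ++ [(x, f x)]) xs


section Abstract

variable {X : Type*}

/-- Submodule of functions in `V` vanishing on a list of inputs. -/
def histKer (V : Submodule ℝ (X → ℝ)) (l : List X) : Submodule ℝ (X → ℝ) where
  carrier := {g | g ∈ V ∧ ∀ x ∈ l, g x = 0}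
  add_mem' := by
    rintro a b ⟨ha, ha'⟩ ⟨hb, hb'⟩
    exact ⟨V.add_mem ha hb, fun x hx => by simp [ha' x hx, hb' x hx]⟩
  zero_mem' := ⟨V.zero_mem, by simp⟩
  smul_mem' := by
    rintro c a ⟨ha, ha'⟩
    exact ⟨V.smul_mem c ha, fun x hx => by simp [ha' x hx]⟩

lemma mem_histKer {V : Submodule ℝ (X → ℝ)} {l : List X} {g : X → ℝ} :
    g ∈ histKer V l ↔ g ∈ V ∧ ∀ x ∈ l, g x = 0 := Iff.rfl

lemma histKer_le (V : Submodule ℝ (X → ℝ)) (l : List X) : histKer V l ≤ V :=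
  fun _ h => h.1

lemma histKer_anti (V : Submodule ℝ (X → ℝ)) {l l' : List X} (h : ∀ x ∈ l, x ∈ l') :
    histKer V l' ≤ histKer V l :=
  fun _ hg => ⟨hg.1, fun x hx => hg.2 x (h x hx)⟩

instance histKer_fd (V : Submodule ℝ (X → ℝ)) [FiniteDimensional ℝ V] (l : List X) :
    FiniteDimensional ℝ (histKer V l) :=
  Submodule.finiteDimensional_of_le (histKer_le V l)

open Classical in
/-- The consistent learner: predicts with any member of `V` consistent with the history. -/
noncomputable def consLearner (V : Submodule ℝ (X → ℝ)) : List (X × ℝ) → X → ℝ :=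
  fun hist x =>
    if h : ∃ g, g ∈ V ∧ ∀ p ∈ hist, g p.1 = p.2 then h.choose x else 0

lemma upper_aux (V : Submodule ℝ (X → ℝ)) [FiniteDimensional ℝ V] (f : X → ℝ) (hf : f ∈ V) :
    ∀ (xs : List X) (hist : List (X × ℝ)), (∀ p ∈ hist, f p.1 = p.2) →
      stdMistakes (consLearner V) f hist xs ≤
        Module.finrank ℝ (histKer V (hist.map Prod.fst)) := by
  intro xs
  induction xs with
  | nil => intro hist _; simp [stdMistakes]
  | cons x xs ih =>
    intro hist hcons
    have hcons' : ∀ p ∈ hist ++ [(x, f x)], f p.1 = p.2 := by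
      intro p hp
      rcases List.mem_append.1 hp with h | h
      · exact hcons p h
      · simp at h; subst h; rfl
    have hle : histKer V ((hist ++ [(x, f x)]).map Prod.fst) ≤ histKer V (hist.map Prod.fst) :=
      histKer_anti V (by intro a ha; simp at ha ⊢; tauto)
    rw [stdMistakes]
    by_cases hguess : consLearner V hist x = f x
    · simp only [hguess, if_pos rfl]
      calc 0 + stdMistakes (consLearner V) f (hist ++ [(x, f x)]) xs
          = stdMistakes (consLearner V) f (hist ++ [(x, f x)]) xs := by ring
        _ ≤ Module.finrank ℝ (histKer V ((hist ++ [(x, f x)]).map Prod.fst)) := ih _ hcons'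
        _ ≤ Module.finrank ℝ (histKer V (hist.map Prod.fst)) := Submodule.finrank_mono hle
    · -- a mistake: strict decrease of dimension
      have hex : ∃ g, g ∈ V ∧ ∀ p ∈ hist, g p.1 = p.2 := ⟨f, hf, hcons⟩
      set g := hex.choose with hg
      have hgspec : g ∈ V ∧ ∀ p ∈ hist, g p.1 = p.2 := hex.choose_spec
      have hLg : consLearner V hist x = g x := by
        rw [consLearner, dif_pos hex]
      have hmem : g - f ∈ histKer V (hist.map Prod.fst) := by
        refine ⟨V.sub_mem hgspec.1 hf, ?_⟩
        intro a ha
        rcases List.mem_map.1 ha with ⟨p, hp, rfl⟩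
        simp [hgspec.2 p hp, hcons p hp]
      have hnmem : g - f ∉ histKer V ((hist ++ [(x, f x)]).map Prod.fst) := by
        intro hmem'
        have := hmem'.2 x (by simp)
        apply hguess
        rw [hLg]
        have : g x - f x = 0 := this
        linarith
      have hlt : histKer V ((hist ++ [(x, f x)]).map Prod.fst) <
          histKer V (hist.map Prod.fst) :=
        lt_of_le_of_ne hle (fun h => hnmem (h ▸ hmem))
      have hflt := Submodule.finrank_lt_finrank_of_lt hlt
      have := ih (hist ++ [(x, f x)]) hcons'
      simp only [if_neg hguess]
      omega

lemma lower_aux (V : Submodule ℝ (X → ℝ)) [FiniteDimensional ℝ V]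
    (L : List (X × ℝ) → X → ℝ) :
    ∀ (n : ℕ) (hist : List (X × ℝ)) (f : X → ℝ), f ∈ V → (∀ p ∈ hist, f p.1 = p.2) →
      n ≤ Module.finrank ℝ (histKer V (hist.map Prod.fst)) →
      ∃ f', f' ∈ V ∧ (∀ p ∈ hist, f' p.1 = p.2) ∧
        ∃ xs, n ≤ stdMistakes L f' hist xs := by
  intro n
  induction n with
  | zero =>
    intro hist f hf hcons _
    exact ⟨f, hf, hcons, [], by simp [stdMistakes]⟩
  | succ n ih =>
    intro hist f hf hcons hrank
    -- histKer is nontrivial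
    have hne : histKer V (hist.map Prod.fst) ≠ ⊥ := by
      intro h
      rw [h, finrank_bot] at hrank
      omega
    obtain ⟨g, hgmem, hgne⟩ := Submodule.exists_mem_ne_zero_of_ne_bot hne
    obtain ⟨x, hgx⟩ : ∃ x, g x ≠ 0 := by
      by_contra h
      push_neg at h
      exact hgne (funext h)
    -- choose c ∈ {1,2} with f x + c * g x ≠ L hist x
    obtain ⟨c, hc0, hcne⟩ : ∃ c : ℝ, c ≠ 0 ∧ f x + c * g x ≠ L hist x := by
      by_cases h1 : f x + 1 * g x = L hist x
      · refine ⟨2, by norm_num, ?_⟩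
        intro h2
        rw [← h1] at h2
        have : g x = 0 := by linarith
        exact hgx this
      · exact ⟨1, one_ne_zero, h1⟩
    set f1 := f + c • g with hf1
    have hf1V : f1 ∈ V := V.add_mem hf (V.smul_mem c (hgmem.1))
    have hf1cons : ∀ p ∈ hist, f1 p.1 = p.2 := by
      intro p hp
      have : g p.1 = 0 := hgmem.2 p.1 (List.mem_map.2 ⟨p, hp, rfl⟩)
      simp [hf1, this, hcons p hp]
    have hf1x : f1 x ≠ L hist x := by
      simpa [hf1] using hcne
    set hist' := hist ++ [(x, f1 x)] with hhist'
    have hcons' : ∀ p ∈ hist', f1 p.1 = p.2 := by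
      intro p hp
      rcases List.mem_append.1 hp with h | h
      · exact hf1cons p h
      · simp at h; subst h; rfl
    -- rank of new histKer ≥ n
    have hrank' : n ≤ Module.finrank ℝ (histKer V (hist'.map Prod.fst)) := by
      set K := histKer V (hist.map Prod.fst)
      set K' := histKer V (hist'.map Prod.fst)
      have hK'le : K' ≤ K := histKer_anti V (by intro a ha; simp [hhist'] at ha ⊢; tauto)
      set φ : K →ₗ[ℝ] ℝ := (LinearMap.proj x).comp K.subtype with hφ
      have hker : LinearMap.ker φ = Submodule.comap K.subtype K' := by
        ext ⟨a, haK⟩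
        simp only [LinearMap.mem_ker, Submodule.mem_comap, hφ, LinearMap.comp_apply,
          Submodule.subtype_apply, LinearMap.proj_apply]
        constructor
        · intro h
          refine ⟨haK.1, ?_⟩
          intro y hy
          rcases List.mem_map.1 hy with ⟨p, hp, rfl⟩
          rcases List.mem_append.1 hp with hp' | hp'
          · exact haK.2 p.1 (List.mem_map.2 ⟨p, hp', rfl⟩)
          · simp [hhist'] at hp'
            subst hp'
            exact h
        · intro h
          exact h.2 x (by simp [hhist'])
      have heq : Module.finrank ℝ (LinearMap.ker φ) = Module.finrank ℝ K' := by
        rw [hker]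
        exact LinearEquiv.finrank_eq (Submodule.comapSubtypeEquivOfLe hK'le)
      have hrn := LinearMap.finrank_range_add_finrank_ker φ
      have hrange : Module.finrank ℝ (LinearMap.range φ) ≤ 1 := by
        have := Submodule.finrank_le (LinearMap.range φ)
        simpa using this
      have hKrank : n + 1 ≤ Module.finrank ℝ K := hrank
      omega
    obtain ⟨f', hf'V, hf'cons, xs, hxs⟩ := ih hist' f1 hf1V hcons' hrank'
    refine ⟨f', hf'V, fun p hp => hf'cons p (List.mem_append.2 (Or.inl hp)), x :: xs, ?_⟩
    have hf'x : f' x = f1 x := hf'cons (x, f1 x) (by simp [hhist'])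
    rw [stdMistakes]
    have hmiss : L hist x ≠ f' x := by rw [hf'x]; exact fun h => hf1x h.symm
    rw [if_neg hmiss, hf'x]
    rw [← hhist']
    omega

end Abstract

section Concrete

variable (k : ℕ) (d : Fin k → ℕ)

/-- The submodule of polynomials where variable `i` has degree at most `d i`. -/
noncomputable def degSub : Submodule ℝ (MvPolynomial (Fin k) ℝ) :=
  AddMonoidAlgebra.supported ℝ ℝ {s : Fin k →₀ ℕ | ∀ i, s i ≤ d i}

lemma mem_degSub {p : MvPolynomial (Fin k) ℝ} :
    p ∈ degSub k d ↔ ∀ i, MvPolynomial.degreeOf i p ≤ d i := by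
  rw [degSub, AddMonoidAlgebra.mem_supported]
  simp only [Set.subset_def, Finset.mem_coe, Set.mem_setOf_eq]
  constructor
  · intro h i
    rw [MvPolynomial.degreeOf_le_iff]
    intro m hm
    exact h m hm i
  · intro h s hs i
    exact (MvPolynomial.degreeOf_le_iff.1 (h i)) s hs

/-- Equivalence of the degree-bounded exponent set with a product of `Fin`s. -/
noncomputable def degEquiv : ↑{s : Fin k →₀ ℕ | ∀ i, s i ≤ d i} ≃ (∀ i, Fin (d i + 1)) where
  toFun s i := ⟨s.1 i, Nat.lt_succ_of_le (s.2 i)⟩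
  invFun t := ⟨Finsupp.equivFunOnFinite.symm (fun i => (t i : ℕ)), by
    intro i
    rw [Finsupp.coe_equivFunOnFinite_symm]
    exact Nat.lt_succ_iff.1 (t i).2⟩
  left_inv s := by
    ext i
    rw [Finsupp.coe_equivFunOnFinite_symm]
  right_inv t := by
    funext i
    ext
    exact congrFun (Finsupp.coe_equivFunOnFinite_symm _) _

noncomputable instance : Fintype ↑{s : Fin k →₀ ℕ | ∀ i, s i ≤ d i} :=
  Fintype.ofEquiv _ (degEquiv k d).symm

/-- The evaluation linear map from polynomials to functions. -/
noncomputable def evalLM : MvPolynomial (Fin k) ℝ →ₗ[ℝ] ((Fin k → ℝ) → ℝ) :=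
  LinearMap.pi fun x => (MvPolynomial.aeval x).toLinearMap

lemma evalLM_apply (p : MvPolynomial (Fin k) ℝ) (x : Fin k → ℝ) :
    evalLM k p x = MvPolynomial.eval x p := by
  simp only [evalLM, LinearMap.pi_apply, AlgHom.toLinearMap_apply]
  exact DFunLike.congr_fun (MvPolynomial.coe_aeval_eq_eval x) p

lemma evalLM_inj : Function.Injective (evalLM k) := by
  intro p q h
  apply MvPolynomial.funext
  intro x
  rw [← evalLM_apply, ← evalLM_apply, h]

lemma degSub_equiv : Nonempty ((degSub k d) ≃ₗ[ℝ]
    ({s : Fin k →₀ ℕ | ∀ i, s i ≤ d i} →₀ ℝ)) :=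
  ⟨AddMonoidAlgebra.supportedEquivFinsupp {s : Fin k →₀ ℕ | ∀ i, s i ≤ d i}⟩

instance : FiniteDimensional ℝ (degSub k d) := by
  obtain ⟨e⟩ := degSub_equiv k d
  have : FiniteDimensional ℝ ({s : Fin k →₀ ℕ | ∀ i, s i ≤ d i} →₀ ℝ) := by
    have : Finite {s : Fin k →₀ ℕ | ∀ i, s i ≤ d i} :=
      Finite.of_equiv _ (degEquiv k d).symm
    infer_instance
  exact Module.Finite.equiv e.symm

lemma finrank_degSub : Module.finrank ℝ (degSub k d) = ∏ i, (d i + 1) := by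
  obtain ⟨e⟩ := degSub_equiv k d
  rw [LinearEquiv.finrank_eq e, Module.finrank_finsupp_self, Fintype.card_congr (degEquiv k d)]
  simp [Fintype.card_pi]

end Concrete

/-- the family of real polynomials in k variables where variable i has
degree at most d i has standard optimal mistake bound exactly ∏ i, (d i + 1). -/
theorem stmt0 (k : ℕ) (hk : 1 ≤ k) (d : Fin k → ℕ)
    (F : Set ((Fin k → ℝ) → ℝ))
    (hF : F = {g | ∃ p : MvPolynomial (Fin k) ℝ,
        (∀ i, MvPolynomial.degreeOf i p ≤ d i) ∧ ∀ x, g x = MvPolynomial.eval x p}) :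
    (∃ L : List ((Fin k → ℝ) × ℝ) → (Fin k → ℝ) → ℝ,
      ∀ f ∈ F, ∀ xs : List (Fin k → ℝ), stdMistakes L f [] xs ≤ ∏ i, (d i + 1)) ∧
    (∀ L : List ((Fin k → ℝ) × ℝ) → (Fin k → ℝ) → ℝ,
      ∃ f ∈ F, ∃ xs : List (Fin k → ℝ), ∏ i, (d i + 1) ≤ stdMistakes L f [] xs) := by
  set P := degSub k d with hP
  set V := Submodule.map (evalLM k) P with hV
  haveI hVfd : FiniteDimensional ℝ V :=
    Module.Finite.equiv (Submodule.equivMapOfInjective (evalLM k) (evalLM_inj k) P)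
  have hFV : F = ↑V := by
    rw [hF]
    ext g
    simp only [Set.mem_setOf_eq, SetLike.mem_coe, hV, Submodule.mem_map]
    constructor
    · rintro ⟨p, hp, hev⟩
      exact ⟨p, (mem_degSub k d).2 hp, by funext x; rw [evalLM_apply]; exact (hev x).symm⟩
    · rintro ⟨p, hp, hev⟩
      exact ⟨p, (mem_degSub k d).1 hp, fun x => by rw [← hev, evalLM_apply]⟩
  have hrankV : Module.finrank ℝ V = ∏ i, (d i + 1) := by
    rw [← LinearEquiv.finrank_eq (Submodule.equivMapOfInjective (evalLM k) (evalLM_inj k) P)]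
    exact finrank_degSub k d
  have hker : histKer V (([] : List ((Fin k → ℝ) × ℝ)).map Prod.fst) = V := by
    ext g; simp [mem_histKer]
  have hkerrank : Module.finrank ℝ
      (histKer V (([] : List ((Fin k → ℝ) × ℝ)).map Prod.fst)) = ∏ i, (d i + 1) := by
    rw [hker, hrankV]
  constructor
  · refine ⟨consLearner V, fun f hf xs => ?_⟩
    have hfV : f ∈ V := by rw [hFV] at hf; exact hf
    have h := upper_aux V f hfV xs [] (by simp)
    rw [hkerrank] at h
    exact h
  · intro L
    obtain ⟨f', hf'V, _, xs, hxs⟩ := lower_aux V L (∏ i, (d i + 1)) [] 0 V.zero_mem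
      (by simp) (by rw [hkerrank])
    exact ⟨f', by rw [hFV]; exact hf'V, xs, hxs⟩
end

section
/- Let n ≥ 1 and let a : ℝ → ℝ be injective. Let F_{n,a} = { x ↦ a(v·x + b) : v ∈ ℝ^n, b ∈ ℝ }, a family of functions ℝ^n → ℝ. Then opt_std(F_{n,a}) = n + 1: some deterministic learner makes at most n + 1 mistakes for every hidden f ∈ F_{n,a} and every finite input sequence, and for every deterministic learner there exist f ∈ F_{n,a} and a finite input sequence forcing at least n + 1 mistakes. -/
/-! ### Auxiliary definitions for the upper bound -/

/-- The linear functional `z ↦ ∑ w.1 i * z.1 i + w.2 * z.2` on `(Fin n → ℝ) × ℝ`. -/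
noncomputable def ellMap (n : ℕ) (w : (Fin n → ℝ) × ℝ) : ((Fin n → ℝ) × ℝ) →ₗ[ℝ] ℝ where
  toFun z := (∑ i, w.1 i * z.1 i) + w.2 * z.2
  map_add' z z' := by
    simp only [Prod.fst_add, Prod.snd_add, Pi.add_apply, mul_add, Finset.sum_add_distrib]
    ring
  map_smul' c z := by
    simp only [Prod.smul_fst, Prod.smul_snd, Pi.smul_apply, smul_eq_mul, RingHom.id_apply]
    rw [mul_add, Finset.mul_sum]
    congr 1
    · exact Finset.sum_congr rfl fun i _ => by ring
    · ring

/-- The set of "lifted" history points `(x, 1)`. -/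
def histSet (n : ℕ) (hist : List ((Fin n → ℝ) × ℝ)) : Set ((Fin n → ℝ) × ℝ) :=
  (fun p : (Fin n → ℝ) × ℝ => (p.1, (1 : ℝ))) '' {p | p ∈ hist}

open Classical in
/-- The consistency-based learner: if the value of every consistent network at `x`
is forced, output it; otherwise output `0`. -/
noncomputable def learnerA (n : ℕ) (a : ℝ → ℝ) :
    List ((Fin n → ℝ) × ℝ) → (Fin n → ℝ) → ℝ := fun hist x =>
  if h : ∃ y, ∀ (v : Fin n → ℝ) (b : ℝ),
      (∀ p ∈ hist, a ((∑ i, v i * p.1 i) + b) = p.2) →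
      a ((∑ i, v i * x i) + b) = y then h.choose else 0

lemma exists_forced (n : ℕ) (a : ℝ → ℝ) (ha : Function.Injective a)
    (hist : List ((Fin n → ℝ) × ℝ)) (x : Fin n → ℝ)
    (hx : ((x, (1 : ℝ)) : (Fin n → ℝ) × ℝ) ∈ Submodule.span ℝ (histSet n hist)) :
    ∃ y, ∀ (v : Fin n → ℝ) (b : ℝ),
      (∀ p ∈ hist, a ((∑ i, v i * p.1 i) + b) = p.2) →
      a ((∑ i, v i * x i) + b) = y := by
  by_cases hc : ∃ (v : Fin n → ℝ) (b : ℝ), ∀ p ∈ hist, a ((∑ i, v i * p.1 i) + b) = p.2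
  · obtain ⟨v₀, b₀, h₀⟩ := hc
    refine ⟨a ((∑ i, v₀ i * x i) + b₀), fun v b hvb => ?_⟩
    have hker : Submodule.span ℝ (histSet n hist) ≤
        LinearMap.ker (ellMap n (v, b) - ellMap n (v₀, b₀)) := by
      rw [Submodule.span_le]
      rintro z ⟨p, hp, rfl⟩
      have h1 : a ((∑ i, v i * p.1 i) + b) = a ((∑ i, v₀ i * p.1 i) + b₀) := by
        rw [hvb p hp, h₀ p hp]
      have h2 := ha h1
      simp only [SetLike.mem_coe, LinearMap.mem_ker, LinearMap.sub_apply, ellMap,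
        LinearMap.coe_mk, AddHom.coe_mk, mul_one, sub_eq_zero]
      exact h2
    have := hker hx
    simp only [LinearMap.mem_ker, LinearMap.sub_apply, ellMap, LinearMap.coe_mk,
      AddHom.coe_mk, mul_one, sub_eq_zero] at this
    rw [this]
  · refine ⟨0, fun v b hvb => absurd ⟨v, b, hvb⟩ hc⟩

lemma learnerA_correct (n : ℕ) (a : ℝ → ℝ) (ha : Function.Injective a)
    (hist : List ((Fin n → ℝ) × ℝ)) (x : Fin n → ℝ)
    (hx : ((x, (1 : ℝ)) : (Fin n → ℝ) × ℝ) ∈ Submodule.span ℝ (histSet n hist))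
    (v : Fin n → ℝ) (b : ℝ)
    (hcons : ∀ p ∈ hist, a ((∑ i, v i * p.1 i) + b) = p.2) :
    learnerA n a hist x = a ((∑ i, v i * x i) + b) := by
  have h := exists_forced n a ha hist x hx
  rw [learnerA, dif_pos h]
  exact (h.choose_spec v b hcons).symm

lemma histSet_append (n : ℕ) (hist : List ((Fin n → ℝ) × ℝ)) (x : Fin n → ℝ) (y : ℝ) :
    histSet n (hist ++ [(x, y)]) = insert (x, (1 : ℝ)) (histSet n hist) := by
  simp only [histSet]
  ext z
  simp only [Set.mem_image, Set.mem_setOf_eq, List.mem_append, List.mem_singleton,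
    Set.mem_insert_iff]
  constructor
  · rintro ⟨p, hp | rfl, rfl⟩
    · exact Or.inr ⟨p, hp, rfl⟩
    · exact Or.inl rfl
  · rintro (rfl | ⟨p, hp, rfl⟩)
    · exact ⟨(x, y), Or.inr rfl, rfl⟩
    · exact ⟨p, Or.inl hp, rfl⟩

lemma upper_aux_s1 (n : ℕ) (a : ℝ → ℝ) (ha : Function.Injective a) :
    ∀ (xs : List (Fin n → ℝ)) (hist : List ((Fin n → ℝ) × ℝ))
      (f : (Fin n → ℝ) → ℝ) (v : Fin n → ℝ) (b : ℝ),
      (∀ x, f x = a ((∑ i, v i * x i) + b)) →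
      (∀ p ∈ hist, a ((∑ i, v i * p.1 i) + b) = p.2) →
      stdMistakes (learnerA n a) f hist xs +
        Module.finrank ℝ (Submodule.span ℝ (histSet n hist)) ≤ n + 1 := by
  intro xs
  induction xs with
  | nil =>
    intro hist f v b hfv hcons
    rw [stdMistakes, zero_add]
    calc Module.finrank ℝ (Submodule.span ℝ (histSet n hist))
        ≤ Module.finrank ℝ ((Fin n → ℝ) × ℝ) := Submodule.finrank_le _
      _ = n + 1 := by
          rw [Module.finrank_prod, Module.finrank_fin_fun, Module.finrank_self]
  | cons x xs ih =>
    intro hist f v b hfv hcons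
    rw [stdMistakes]
    have hcons' : ∀ p ∈ hist ++ [(x, f x)], a ((∑ i, v i * p.1 i) + b) = p.2 := by
      intro p hp
      rcases List.mem_append.1 hp with h | h
      · exact hcons p h
      · rw [List.mem_singleton] at h
        subst h
        exact (hfv x).symm
    have ih' := ih (hist ++ [(x, f x)]) f v b hfv hcons'
    by_cases hx : ((x, (1 : ℝ)) : (Fin n → ℝ) × ℝ) ∈ Submodule.span ℝ (histSet n hist)
    · -- no mistake, and rank does not decrease
      have hguess : learnerA n a hist x = f x := by
        rw [learnerA_correct n a ha hist x hx v b hcons, hfv x]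
      rw [if_pos hguess, zero_add]
      have hmono : Module.finrank ℝ (Submodule.span ℝ (histSet n hist)) ≤
          Module.finrank ℝ (Submodule.span ℝ (histSet n (hist ++ [(x, f x)]))) := by
        apply Submodule.finrank_mono
        apply Submodule.span_mono
        rw [histSet_append]
        exact Set.subset_insert _ _
      omega
    · -- rank strictly increases
      have hlt : Submodule.span ℝ (histSet n hist) <
          Submodule.span ℝ (histSet n (hist ++ [(x, f x)])) := by
        rw [histSet_append]
        refine lt_of_le_of_ne (Submodule.span_mono (Set.subset_insert _ _)) fun he => ?_
        apply hx
        rw [he]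
        exact Submodule.subset_span (Set.mem_insert _ _)
      have hrk := Submodule.finrank_lt_finrank_of_lt hlt
      have hif : (if learnerA n a hist x = f x then 0 else 1) ≤ 1 := by
        split <;> omega
      omega

/-! ### Auxiliary definitions for the lower bound -/

/-- A real `r` with `a r ≠ g`, for injective `a`. -/
noncomputable def pickNe (a : ℝ → ℝ) (g : ℝ) : ℝ := if a 0 = g then 1 else 0

lemma pickNe_spec (a : ℝ → ℝ) (ha : Function.Injective a) (g : ℝ) : a (pickNe a g) ≠ g := by
  rw [pickNe]
  split
  · rename_i h
    rw [← h]
    intro h1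
    exact one_ne_zero (ha h1)
  · assumption

/-- The adversarial points: `pt 0 = 0`, `pt (i+1) = e_i`. -/
def advPt (n : ℕ) : ℕ → Fin n → ℝ := fun j k => if (k : ℕ) + 1 = j then 1 else 0

/-- Adversarial hidden values, built by simulating the learner:
`advFun n a L j` gives the first `j` values (as a function on `ℕ`,
arbitrary `0` beyond `j`). -/
noncomputable def advFun (n : ℕ) (a : ℝ → ℝ)
    (L : List ((Fin n → ℝ) × ℝ) → (Fin n → ℝ) → ℝ) : ℕ → ℕ → ℝ
  | 0 => fun _ => 0
  | j + 1 => fun i =>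
      if i = j then
        pickNe a (L ((List.range j).map
          (fun k => (advPt n k, a (advFun n a L j k)))) (advPt n j))
      else advFun n a L j i

/-- The adversarial value sequence. -/
noncomputable def advS (n : ℕ) (a : ℝ → ℝ)
    (L : List ((Fin n → ℝ) × ℝ) → (Fin n → ℝ) → ℝ) : ℕ → ℝ :=
  fun i => advFun n a L (i + 1) i

lemma advFun_succ_apply (n : ℕ) (a : ℝ → ℝ)
    (L : List ((Fin n → ℝ) × ℝ) → (Fin n → ℝ) → ℝ) (j i : ℕ) :
    advFun n a L (j + 1) i =
      if i = j then
        pickNe a (L ((List.range j).map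
          (fun k => (advPt n k, a (advFun n a L j k)))) (advPt n j))
      else advFun n a L j i := rfl

lemma advFun_agree (n : ℕ) (a : ℝ → ℝ) (L : List ((Fin n → ℝ) × ℝ) → (Fin n → ℝ) → ℝ) :
    ∀ j i, i < j → advFun n a L j i = advS n a L i := by
  intro j
  induction j with
  | zero => intro i hi; omega
  | succ j ih =>
    intro i hi
    rcases Nat.lt_succ_iff_lt_or_eq.1 hi with h | rfl
    · rw [advFun_succ_apply, if_neg (by omega)]
      exact ih i h
    · rfl

lemma advS_spec (n : ℕ) (a : ℝ → ℝ) (ha : Function.Injective a)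
    (L : List ((Fin n → ℝ) × ℝ) → (Fin n → ℝ) → ℝ) (j : ℕ) :
    a (advS n a L j) ≠
      L ((List.range j).map (fun k => (advPt n k, a (advS n a L k)))) (advPt n j) := by
  have : advS n a L j = pickNe a (L ((List.range j).map
      (fun k => (advPt n k, a (advS n a L k)))) (advPt n j)) := by
    show advFun n a L (j + 1) j = _
    rw [advFun_succ_apply, if_pos rfl]
    have hl : (List.range j).map (fun k => (advPt n k, a (advFun n a L j k))) =
        (List.range j).map (fun k => (advPt n k, a (advS n a L k))) := by
      apply List.map_congr_left
      intro k hk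
      rw [advFun_agree n a L j k (List.mem_range.1 hk)]
    rw [hl]
  rw [this]
  exact pickNe_spec a ha _

lemma mistakes_lower {X : Type*} (L : List (X × ℝ) → X → ℝ) (f : X → ℝ) (pt : ℕ → X) :
    ∀ (m j : ℕ),
      (∀ i, j ≤ i → i < j + m →
        L ((List.range i).map (fun k => (pt k, f (pt k)))) (pt i) ≠ f (pt i)) →
      stdMistakes L f ((List.range j).map (fun k => (pt k, f (pt k))))
        ((List.range' j m).map pt) = m := by
  intro m
  induction m with
  | zero => intro j _; simp [stdMistakes]
  | succ m ih =>
    intro j h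
    rw [List.range'_succ, List.map_cons, stdMistakes,
      if_neg (h j le_rfl (by omega))]
    have hhist : (List.range j).map (fun k => (pt k, f (pt k))) ++ [(pt j, f (pt j))] =
        (List.range (j + 1)).map (fun k => (pt k, f (pt k))) := by
      rw [List.range_succ, List.map_append]
      rfl
    rw [hhist]
    have := ih (j + 1) (fun i h1 h2 => h i (by omega) (by omega))
    rw [this]
    omega

/-- for an injective activation a, the family of 1-layer neural
networks x ↦ a(v·x + b) on ℝ^n has standard optimal mistake bound exactly n + 1. -/
theorem stmt1 (n : ℕ) (hn : 1 ≤ n) (a : ℝ → ℝ) (ha : Function.Injective a)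
    (F : Set ((Fin n → ℝ) → ℝ))
    (hF : F = {g | ∃ (v : Fin n → ℝ) (b : ℝ), ∀ x, g x = a ((∑ i, v i * x i) + b)}) :
    (∃ L : List ((Fin n → ℝ) × ℝ) → (Fin n → ℝ) → ℝ,
      ∀ f ∈ F, ∀ xs : List (Fin n → ℝ), stdMistakes L f [] xs ≤ n + 1) ∧
    (∀ L : List ((Fin n → ℝ) × ℝ) → (Fin n → ℝ) → ℝ,
      ∃ f ∈ F, ∃ xs : List (Fin n → ℝ), n + 1 ≤ stdMistakes L f [] xs) := by
  constructor
  · -- upper bound via the consistency learner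
    refine ⟨learnerA n a, fun f hf xs => ?_⟩
    rw [hF] at hf
    obtain ⟨v, b, hfv⟩ := hf
    have := upper_aux_s1 n a ha xs [] f v b hfv (by simp)
    have hz : Module.finrank ℝ (Submodule.span ℝ (histSet n
        ([] : List ((Fin n → ℝ) × ℝ)))) = 0 := by
      have he : histSet n ([] : List ((Fin n → ℝ) × ℝ)) = ∅ := by
        simp [histSet]
      rw [he, Submodule.span_empty, finrank_bot]
    omega
  · -- lower bound via the adversary
    intro L
    set s : ℕ → ℝ := advS n a L with hs
    set v : Fin n → ℝ := fun k => s ((k : ℕ) + 1) - s 0 with hv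
    set f : (Fin n → ℝ) → ℝ := fun x => a ((∑ i, v i * x i) + s 0) with hfdef
    have hfF : f ∈ F := by
      rw [hF]
      exact ⟨v, s 0, fun x => rfl⟩
    have hval : ∀ j, j ≤ n → f (advPt n j) = a (s j) := by
      intro j hj
      show a ((∑ i, v i * advPt n j i) + s 0) = a (s j)
      congr 1
      cases j with
      | zero =>
        simp [advPt]
      | succ m =>
        have hm : m < n := by omega
        have hsum : (∑ i, v i * advPt n (m + 1) i) = s (m + 1) - s 0 := by
          rw [Finset.sum_eq_single (⟨m, hm⟩ : Fin n)]
          · simp [advPt, hv]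
          · intro i _ hi
            have hne : (i : ℕ) + 1 ≠ m + 1 := fun hcon =>
              hi (Fin.ext (Nat.add_right_cancel hcon))
            simp [advPt, hne, show (i : ℕ) ≠ m from fun h => hne (by omega)]
          · simp
        rw [hsum]
        ring
    have hcond : ∀ i, 0 ≤ i → i < 0 + (n + 1) →
        L ((List.range i).map (fun k => (advPt n k, f (advPt n k)))) (advPt n i) ≠
          f (advPt n i) := by
      intro i _ hi
      have hmap : (List.range i).map (fun k => (advPt n k, f (advPt n k))) =
          (List.range i).map (fun k => (advPt n k, a (s k))) := by
        apply List.map_congr_left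
        intro k hk
        rw [hval k (by have := List.mem_range.1 hk; omega)]
      rw [hmap, hval i (by omega)]
      exact (advS_spec n a ha L i).symm
    have hmain := mistakes_lower L f (advPt n) (n + 1) 0 hcond
    simp only [List.range_zero, List.map_nil] at hmain
    refine ⟨f, hfF, (List.range' 0 (n + 1)).map (advPt n), ?_⟩
    rw [hmain]
end

section
/- Let n ≥ 1 and k ≥ 2. For z ∈ ℝ^k define softmax(z) ∈ ℝ^k by softmax(z)_i = e^{z_i} / Σ_{j=1}^k e^{z_j}. Let F_{n,σ_k} = { x ↦ softmax(Ax + b) : A a real k × n matrix, b ∈ ℝ^k }, a family of functions ℝ^n → ℝ^k. Then opt_std(F_{n,σ_k}) = n + 1: some deterministic learner makes at most n + 1 mistakes for every hidden f ∈ F_{n,σ_k} and every finite input sequence, and for every deterministic learner there exist f ∈ F_{n,σ_k} and a finite input sequence forcing at least n + 1 mistakes. -/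
/-- The softmax function on `ℝ^k`. -/
noncomputable def sm (k : ℕ) (z : Fin k → ℝ) : Fin k → ℝ :=
  fun i => Real.exp (z i) / ∑ j, Real.exp (z j)

lemma sm_sum_pos (k : ℕ) (hk : 0 < k) (z : Fin k → ℝ) : 0 < ∑ j, Real.exp (z j) := by
  have : Nonempty (Fin k) := ⟨⟨0, hk⟩⟩
  exact Finset.sum_pos (fun j _ => Real.exp_pos _) Finset.univ_nonempty

lemma sm_shift (k : ℕ) (z : Fin k → ℝ) (c : ℝ) :
    sm k (fun i => z i + c) = sm k z := by
  funext i
  simp only [sm, Real.exp_add]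
  rw [← Finset.sum_mul, mul_div_mul_right _ _ (Real.exp_ne_zero c)]

lemma sm_inj (k : ℕ) (hk : 0 < k) {z z' : Fin k → ℝ} (h : sm k z = sm k z') :
    ∃ c, ∀ i, z i = z' i + c := by
  have hS := sm_sum_pos k hk z
  have hS' := sm_sum_pos k hk z'
  refine ⟨Real.log (∑ j, Real.exp (z j)) - Real.log (∑ j, Real.exp (z' j)), fun i => ?_⟩
  have hi := congrFun h i
  simp only [sm] at hi
  have h2 : Real.exp (z i) * (∑ j, Real.exp (z' j)) = Real.exp (z' i) * (∑ j, Real.exp (z j)) :=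
    (div_eq_div_iff hS.ne' hS'.ne').1 hi
  have h3 := congrArg Real.log h2
  rw [Real.log_mul (Real.exp_ne_zero _) hS'.ne', Real.log_mul (Real.exp_ne_zero _) hS.ne',
    Real.log_exp, Real.log_exp] at h3
  linarith

noncomputable def dvec (k : ℕ) : Fin k → ℝ := fun j => if (j : ℕ) = 0 then 1 else 0

/-- A point whose softmax differs from the given vector `p`. -/
noncomputable def pick (k : ℕ) (p : Fin k → ℝ) : Fin k → ℝ :=
  if sm k (dvec k) = p then 0 else dvec k

lemma sm_pick_ne (k : ℕ) (hk : 2 ≤ k) (p : Fin k → ℝ) : sm k (pick k p) ≠ p := by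
  unfold pick
  split_ifs with h
  · rw [← h]
    intro h0
    obtain ⟨c, hc⟩ := sm_inj k (by omega) h0
    have h1 := hc ⟨0, by omega⟩
    have h2 := hc ⟨1, by omega⟩
    simp [dvec] at h1 h2
    linarith
  · exact h

/-- The adversarial history against learner `L` on inputs `x 0, x 1, …`. -/
noncomputable def advH (n k : ℕ)
    (L : List ((Fin n → ℝ) × (Fin k → ℝ)) → (Fin n → ℝ) → (Fin k → ℝ))
    (x : ℕ → (Fin n → ℝ)) : ℕ → List ((Fin n → ℝ) × (Fin k → ℝ))
  | 0 => []
  | t + 1 => advH n k L x t ++ [(x t, sm k (pick k (L (advH n k L x t) (x t))))]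

lemma adv_mistakes (n k : ℕ) (hk : 2 ≤ k)
    (L : List ((Fin n → ℝ) × (Fin k → ℝ)) → (Fin n → ℝ) → (Fin k → ℝ))
    (x : ℕ → (Fin n → ℝ)) (f : (Fin n → ℝ) → (Fin k → ℝ)) :
    ∀ (j t : ℕ), (∀ s, s < t + j → f (x s) = sm k (pick k (L (advH n k L x s) (x s)))) →
      stdMistakes L f (advH n k L x t) ((List.range' t j).map x) = j := by
  intro j
  induction j with
  | zero => intro t _; simp [stdMistakes]
  | succ j ih =>
    intro t hs
    have hft : f (x t) = sm k (pick k (L (advH n k L x t) (x t))) := hs t (by omega)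
    have hmis : ¬ (L (advH n k L x t) (x t) = f (x t)) := by
      rw [hft]; exact fun h => sm_pick_ne k hk _ h.symm
    rw [List.range'_succ, List.map_cons]
    simp only [stdMistakes, if_neg hmis]
    have hH : advH n k L x t ++ [(x t, f (x t))] = advH n k L x (t + 1) := by
      rw [hft]; rfl
    rw [hH, ih (t + 1) (fun s h => hs s (by omega))]; omega

/-- Linear span of the lifted inputs `(x, 1)` appearing in a history. -/
def histSpan (n k : ℕ) (hist : List ((Fin n → ℝ) × (Fin k → ℝ))) :
    Submodule ℝ ((Fin n → ℝ) × ℝ) :=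
  Submodule.span ℝ ((fun p => (p.1, (1:ℝ))) '' {p : (Fin n → ℝ) × (Fin k → ℝ) | p ∈ hist})

lemma agree_of_mem_span (n k : ℕ) (hk : 0 < k)
    (Ag Af : Matrix (Fin k) (Fin n) ℝ) (bg bf : Fin k → ℝ)
    (hist : List ((Fin n → ℝ) × (Fin k → ℝ)))
    (hcons : ∀ p ∈ hist,
      sm k (fun i => Ag.mulVec p.1 i + bg i) = sm k (fun i => Af.mulVec p.1 i + bf i))
    (x : Fin n → ℝ) (hx : (x, (1:ℝ)) ∈ histSpan n k hist) :
    sm k (fun i => Ag.mulVec x i + bg i) = sm k (fun i => Af.mulVec x i + bf i) := by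
  set M : ((Fin n → ℝ) × ℝ) →ₗ[ℝ] (Fin k → ℝ) :=
    (Matrix.mulVecLin (Ag - Af)).comp (LinearMap.fst ℝ (Fin n → ℝ) ℝ) +
      (LinearMap.snd ℝ (Fin n → ℝ) ℝ).smulRight (bg - bf) with hM
  have hMapp : ∀ (v : Fin n → ℝ), M (v, 1) =
      fun i => (Ag.mulVec v i + bg i) - (Af.mulVec v i + bf i) := by
    intro v
    funext i
    simp [hM, Matrix.sub_mulVec, Matrix.mulVecLin_apply]
    ring
  set D : Submodule ℝ (Fin k → ℝ) := Submodule.span ℝ {(fun _ => (1:ℝ) : Fin k → ℝ)} with hD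
  have hsub : histSpan n k hist ≤ D.comap M := by
    rw [histSpan, Submodule.span_le]
    rintro w ⟨p, hp, rfl⟩
    obtain ⟨c, hc⟩ := sm_inj k hk (hcons p hp)
    simp only [Submodule.mem_comap, SetLike.mem_coe]
    rw [hD, Submodule.mem_span_singleton]
    exact ⟨c, by funext i; rw [hMapp]; have := hc i; simp; linarith⟩
  have hxD : M (x, 1) ∈ D := hsub hx
  rw [hD, Submodule.mem_span_singleton] at hxD
  obtain ⟨c, hc⟩ := hxD
  have hzz : (fun i => Ag.mulVec x i + bg i) = fun i => (Af.mulVec x i + bf i) + c := by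
    funext i
    have := congrFun hc i
    rw [hMapp] at this
    simp at this
    linarith
  rw [hzz, sm_shift]

lemma upper (n k : ℕ) (hk : 0 < k)
    (F : Set ((Fin n → ℝ) → (Fin k → ℝ)))
    (hF : F = {g | ∃ (A : Matrix (Fin k) (Fin n) ℝ) (b : Fin k → ℝ),
        ∀ x i, g x i = Real.exp (A.mulVec x i + b i) /
          ∑ j, Real.exp (A.mulVec x j + b j)}) :
    ∃ L : List ((Fin n → ℝ) × (Fin k → ℝ)) → (Fin n → ℝ) → (Fin k → ℝ),
      ∀ f ∈ F, ∀ xs : List (Fin n → ℝ), stdMistakes L f [] xs ≤ n + 1 := by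
  classical
  have hFsm : ∀ g ∈ F, ∃ (A : Matrix (Fin k) (Fin n) ℝ) (b : Fin k → ℝ),
      ∀ x, g x = sm k (fun i => A.mulVec x i + b i) := by
    intro g hg
    rw [hF] at hg
    obtain ⟨A, b, hAb⟩ := hg
    exact ⟨A, b, fun x => funext fun i => hAb x i⟩
  set L : List ((Fin n → ℝ) × (Fin k → ℝ)) → (Fin n → ℝ) → (Fin k → ℝ) :=
    fun hist x =>
      if h : ∃ g, g ∈ F ∧ ∀ p ∈ hist, g p.1 = p.2 then h.choose x else 0 with hL
  refine ⟨L, fun f hf xs => ?_⟩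
  have hamb : Module.finrank ℝ ((Fin n → ℝ) × ℝ) = n + 1 := by
    simp [Module.finrank_prod]
  have agree : ∀ (hist : List ((Fin n → ℝ) × (Fin k → ℝ))),
      (∀ p ∈ hist, p.2 = f p.1) → ∀ x, (x, (1:ℝ)) ∈ histSpan n k hist → L hist x = f x := by
    intro hist hcons x hx
    have hex : ∃ g, g ∈ F ∧ ∀ p ∈ hist, g p.1 = p.2 :=
      ⟨f, hf, fun p hp => (hcons p hp).symm⟩
    have hLval : L hist x = hex.choose x := by
      rw [hL]
      show (if h : ∃ g, g ∈ F ∧ ∀ p ∈ hist, g p.1 = p.2 then h.choose x else 0) = hex.choose x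
      rw [dif_pos hex]
    obtain ⟨hgF, hgcons⟩ := hex.choose_spec
    obtain ⟨Ag, bg, hg⟩ := hFsm _ hgF
    obtain ⟨Af, bf, hff⟩ := hFsm _ hf
    rw [hLval, hg, hff]
    exact agree_of_mem_span n k hk Ag Af bg bf hist
      (fun p hp => by
        rw [← hg, ← hff]
        exact (hgcons p hp).trans (hcons p hp))
      x hx
  have main : ∀ (xs : List (Fin n → ℝ)) (hist : List ((Fin n → ℝ) × (Fin k → ℝ))),
      (∀ p ∈ hist, p.2 = f p.1) →
      stdMistakes L f hist xs + Module.finrank ℝ (histSpan n k hist) ≤ n + 1 := by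
    intro xs
    induction xs with
    | nil =>
      intro hist _
      simpa [stdMistakes, hamb] using Submodule.finrank_le (histSpan n k hist)
    | cons x rest ih =>
      intro hist hcons
      have hcons' : ∀ p ∈ hist ++ [(x, f x)], p.2 = f p.1 := by
        intro p hp
        rcases List.mem_append.1 hp with h | h
        · exact hcons p h
        · simp at h; subst h; rfl
      have hVle : histSpan n k hist ≤ histSpan n k (hist ++ [(x, f x)]) := by
        apply Submodule.span_mono
        apply Set.image_mono
        intro p hp
        exact List.mem_append.2 (Or.inl hp)
      by_cases hmis : L hist x = f x
      · have := ih (hist ++ [(x, f x)]) hcons'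
        have hmono := Submodule.finrank_mono hVle
        simp only [stdMistakes, if_pos hmis]
        omega
      · have hxV : (x, (1:ℝ)) ∉ histSpan n k hist := fun hxV => hmis (agree hist hcons x hxV)
        have hxV' : (x, (1:ℝ)) ∈ histSpan n k (hist ++ [(x, f x)]) :=
          Submodule.subset_span ⟨(x, f x), by simp, rfl⟩
        have hlt : histSpan n k hist < histSpan n k (hist ++ [(x, f x)]) :=
          lt_of_le_of_ne hVle (fun h => hxV (h ▸ hxV'))
        have hrk := Submodule.finrank_lt_finrank_of_lt hlt
        have := ih (hist ++ [(x, f x)]) hcons'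
        simp only [stdMistakes, if_neg hmis]
        omega
  have := main xs [] (by simp)
  omega

/-- the family of 1-layer softmax neural networks x ↦ softmax(Ax + b)
from ℝ^n to ℝ^k has standard optimal mistake bound exactly n + 1. -/
theorem stmt3 (n k : ℕ) (hn : 1 ≤ n) (hk : 2 ≤ k)
    (F : Set ((Fin n → ℝ) → (Fin k → ℝ)))
    (hF : F = {g | ∃ (A : Matrix (Fin k) (Fin n) ℝ) (b : Fin k → ℝ),
        ∀ x i, g x i = Real.exp (A.mulVec x i + b i) /
          ∑ j, Real.exp (A.mulVec x j + b j)}) :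
    (∃ L : List ((Fin n → ℝ) × (Fin k → ℝ)) → (Fin n → ℝ) → (Fin k → ℝ),
      ∀ f ∈ F, ∀ xs : List (Fin n → ℝ), stdMistakes L f [] xs ≤ n + 1) ∧
    (∀ L : List ((Fin n → ℝ) × (Fin k → ℝ)) → (Fin n → ℝ) → (Fin k → ℝ),
      ∃ f ∈ F, ∃ xs : List (Fin n → ℝ), n + 1 ≤ stdMistakes L f [] xs) := by
  constructor
  · exact upper n k (by omega) F hF
  · intro L
    set x : ℕ → (Fin n → ℝ) := fun t i => if (i : ℕ) + 1 = t then 1 else 0 with hx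
    set c : ℕ → (Fin k → ℝ) := fun t => pick k (L (advH n k L x t) (x t)) with hc
    set A : Matrix (Fin k) (Fin n) ℝ := fun i s => c ((s : ℕ) + 1) i - c 0 i with hA
    set f : (Fin n → ℝ) → (Fin k → ℝ) := fun y => sm k (fun i => A.mulVec y i + c 0 i) with hf
    have hfF : f ∈ F := by
      rw [hF]
      exact ⟨A, c 0, fun y i => rfl⟩
    have hfx : ∀ t, t ≤ n → f (x t) = sm k (c t) := by
      intro t ht
      have harg : (fun i => A.mulVec (x t) i + c 0 i) = c t := by
        funext i
        have hmv : A.mulVec (x t) i =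
            ∑ s : Fin n, (c ((s : ℕ) + 1) i - c 0 i) * (if (s : ℕ) + 1 = t then 1 else 0) := by
          simp [Matrix.mulVec, dotProduct, hA, hx]
        rcases Nat.eq_zero_or_pos t with ht0 | htpos
        · subst ht0
          rw [hmv]
          have : ∀ s : Fin n,
              (c ((s : ℕ) + 1) i - c 0 i) * (if (s : ℕ) + 1 = 0 then 1 else 0) = 0 := by
            intro s; rw [if_neg (by omega)]; ring
          rw [Finset.sum_congr rfl (fun s _ => this s), Finset.sum_const_zero]
          ring
        · obtain ⟨u, rfl⟩ : ∃ u, t = u + 1 := ⟨t - 1, by omega⟩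
          have hu : u < n := by omega
          rw [hmv, Finset.sum_eq_single (⟨u, hu⟩ : Fin n)
            (fun s _ hs => by
              rw [if_neg (fun hcon => hs (Fin.ext (by simpa using hcon)))]; ring)
            (fun habs => absurd (Finset.mem_univ _) habs)]
          simp
      show sm k (fun i => A.mulVec (x t) i + c 0 i) = sm k (c t)
      rw [harg]
    refine ⟨f, hfF, (List.range' 0 (n + 1)).map x, ?_⟩
    have hkey := adv_mistakes n k hk L x f (n + 1) 0
      (fun s hs => by rw [hfx s (by omega)])
    have h0 : advH n k L x 0 = [] := rfl
    rw [h0] at hkey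
    rw [hkey]
end

section
/- Let ReLU(t) = max(t, 0) and let F be the family of functions ℝ → ℝ of the form x ↦ ReLU(c + Σ_{i=1}^4 w_i · ReLU(a_i x + b_i)) for real parameters a_1,…,a_4, b_1,…,b_4, w_1,…,w_4, c (2-layer neural networks with a single input, 4 hidden neurons, a single output neuron, and standard relu activations). Then opt_std(F) = ∞: for every deterministic learner and every natural number M, there exist f ∈ F and a finite input sequence on which the learner makes at least M mistakes. -/
/-- A "soft step" function: 0 for `x ≤ θ`, ramps up to 1 at `θ + δ`. -/
noncomputable def net (θ δ x : ℝ) : ℝ :=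
  max ((max (x - θ) 0 - max (x - θ - δ) 0) / δ) 0

lemma net_left {θ δ x : ℝ} (hδ : 0 < δ) (h : x ≤ θ) : net θ δ x = 0 := by
  have h1 : max (x - θ) 0 = 0 := max_eq_right (by linarith)
  have h2 : max (x - θ - δ) 0 = 0 := max_eq_right (by linarith)
  simp [net, h1, h2]

lemma net_right {θ δ x : ℝ} (hδ : 0 < δ) (h : θ + δ ≤ x) : net θ δ x = 1 := by
  have h1 : max (x - θ) 0 = x - θ := max_eq_left (by linarith)
  have h2 : max (x - θ - δ) 0 = x - θ - δ := max_eq_left (by linarith)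
  rw [net, h1, h2]
  have h3 : (x - θ - (x - θ - δ)) / δ = 1 := by field_simp; ring
  rw [h3]
  exact max_eq_left zero_le_one

lemma key (L : List (ℝ × ℝ) → ℝ → ℝ) :
    ∀ M : ℕ, ∀ hist : List (ℝ × ℝ), ∀ l r : ℝ, l < r →
    ∃ θ δ : ℝ, 0 < δ ∧ l ≤ θ ∧ θ + δ ≤ r ∧
      ∃ xs : List ℝ, M ≤ stdMistakes L (net θ δ) hist xs := by
  intro M
  induction M with
  | zero =>
    intro hist l r hlr
    exact ⟨l, r - l, by linarith, le_refl l, by linarith, [], by simp [stdMistakes]⟩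
  | succ M ih =>
    intro hist l r hlr
    set x := (l + r) / 2 with hx
    have hlx : l < x := by rw [hx]; linarith
    have hxr : x < r := by rw [hx]; linarith
    by_cases hg : L hist x = 0
    · -- learner guesses 0: reveal 1, putting θ + δ left of x
      obtain ⟨θ, δ, hδ, hlθ, hθx, xs, hm⟩ := ih (hist ++ [(x, 1)]) l x hlx
      refine ⟨θ, δ, hδ, hlθ, by linarith, x :: xs, ?_⟩
      have hfx : net θ δ x = 1 := net_right hδ hθx
      rw [stdMistakes, hfx, hg]
      simp only [if_neg (by norm_num : (0:ℝ) ≠ 1)]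
      omega
      -- goal : M + 1 ≤ 1 + stdMistakes ...
    · -- learner guesses nonzero: reveal 0, putting θ right of x
      obtain ⟨θ, δ, hδ, hxθ, hθr, xs, hm⟩ := ih (hist ++ [(x, 0)]) x r hxr
      refine ⟨θ, δ, hδ, le_of_lt (lt_of_lt_of_le hlx hxθ), hθr, x :: xs, ?_⟩
      have hfx : net θ δ x = 0 := net_left hδ hxθ
      rw [stdMistakes, hfx]
      simp only [if_neg hg]
      omega
  
/-- the family of 2-layer relu neural networks with one input, 4 hidden
neurons and one output neuron has infinite standard optimal mistake bound. -/
theorem stmt4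
    (F : Set (ℝ → ℝ))
    (hF : F = {g | ∃ (a b w : Fin 4 → ℝ) (c : ℝ),
        ∀ x, g x = max (c + ∑ i, w i * max (a i * x + b i) 0) 0}) :
    ∀ L : List (ℝ × ℝ) → ℝ → ℝ, ∀ M : ℕ,
      ∃ f ∈ F, ∃ xs : List ℝ, M ≤ stdMistakes L f [] xs := by
  intro L M
  obtain ⟨θ, δ, hδ, _, _, xs, hm⟩ := key L M [] 0 1 one_pos
  refine ⟨net θ δ, ?_, xs, hm⟩
  rw [hF]
  refine ⟨![1, 1, 0, 0], ![-θ, -(θ + δ), 0, 0], ![δ⁻¹, -δ⁻¹, 0, 0], 0, fun x => ?_⟩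
  rw [Fin.sum_univ_four]
  simp only [Matrix.cons_val_zero, Matrix.cons_val_one, Matrix.head_cons,
    Matrix.cons_val_two, Matrix.tail_cons, Matrix.cons_val_three]
  have e1 : (1:ℝ) * x + -θ = x - θ := by ring
  have e2 : (1:ℝ) * x + -(θ + δ) = x - θ - δ := by ring
  have e3 : (0:ℝ) * x + 0 = 0 := by ring
  rw [e1, e2, e3]
  rw [net]
  congr 1
  ring
end

section
/- Let 0 < α < 1 and let ReLU_α : ℝ → ℝ be defined by ReLU_α(t) = t for t > 0 and ReLU_α(t) = αt for t ≤ 0. Let F_α be the family of functions ℝ → ℝ of the form x ↦ ReLU_α(c + Σ_{i=1}^4 w_i · ReLU_α(a_i x + b_i)) for real parameters a_1,…,a_4, b_1,…,b_4, w_1,…,w_4, c (2-layer neural networks with a single input, 4 hidden neurons, a single output neuron, and leaky relu activations). Then opt_std(F_α) = ∞: for every deterministic learner and every natural number M, there exist f ∈ F_α and a finite input sequence on which the learner makes at least M mistakes. -/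
/- Adversary's binary search: maintains an interval `(lo, hi)`; queries the midpoint;
if the learner predicts `-α` it answers `1` (pushing `hi` down), otherwise it answers
`-α` (pushing `lo` up).  Returns the query list and the final interval. -/
open Classical in
noncomputable def advRun (L : List (ℝ × ℝ) → ℝ → ℝ) (α : ℝ) :
    ℕ → List (ℝ × ℝ) → ℝ → ℝ → List ℝ × ℝ × ℝ
  | 0, _, lo, hi => ([], lo, hi)
  | n+1, hist, lo, hi =>
      ((lo + hi) / 2 ::
        (advRun L α n
          (hist ++ [((lo + hi) / 2, if L hist ((lo + hi) / 2) = -α then (1:ℝ) else -α)])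
          (if L hist ((lo + hi) / 2) = -α then lo else (lo + hi) / 2)
          (if L hist ((lo + hi) / 2) = -α then (lo + hi) / 2 else hi)).1,
       (advRun L α n
          (hist ++ [((lo + hi) / 2, if L hist ((lo + hi) / 2) = -α then (1:ℝ) else -α)])
          (if L hist ((lo + hi) / 2) = -α then lo else (lo + hi) / 2)
          (if L hist ((lo + hi) / 2) = -α then (lo + hi) / 2 else hi)).2)

lemma advRun_spec (L : List (ℝ × ℝ) → ℝ → ℝ) (α : ℝ) (hα0 : 0 < α) (n : ℕ) :
    ∀ hist lo hi, lo < hi →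
      lo ≤ (advRun L α n hist lo hi).2.1 ∧ (advRun L α n hist lo hi).2.2 ≤ hi ∧
      (advRun L α n hist lo hi).2.1 < (advRun L α n hist lo hi).2.2 ∧
      ∀ f : ℝ → ℝ, (∀ x, x ≤ (advRun L α n hist lo hi).2.1 → f x = -α) →
        (∀ x, (advRun L α n hist lo hi).2.2 ≤ x → f x = 1) →
        n ≤ stdMistakes L f hist (advRun L α n hist lo hi).1 := by
  induction n with
  | zero =>
    intro hist lo hi hlh
    simp only [advRun]
    exact ⟨le_refl _, le_refl _, hlh, fun f _ _ => by simp [stdMistakes]⟩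
  | succ n ih =>
    intro hist lo hi hlh
    by_cases c : L hist ((lo + hi) / 2) = -α
    · -- answer 1, new interval (lo, mid)
      simp only [advRun, if_pos c]
      obtain ⟨h1, h2, h3, h4⟩ := ih (hist ++ [((lo + hi) / 2, (1:ℝ))]) lo ((lo + hi) / 2)
        (by linarith)
      refine ⟨h1, by linarith, h3, ?_⟩
      intro f hf1 hf2
      have hfx : f ((lo + hi) / 2) = 1 := hf2 _ h2
      have hne : L hist ((lo + hi) / 2) ≠ f ((lo + hi) / 2) := by
        rw [c, hfx]; intro h; linarith
      rw [stdMistakes, if_neg hne, hfx]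
      have := h4 f hf1 hf2
      omega
    · -- answer -α, new interval (mid, hi)
      simp only [advRun, if_neg c]
      obtain ⟨h1, h2, h3, h4⟩ := ih (hist ++ [((lo + hi) / 2, -α)]) ((lo + hi) / 2) hi
        (by linarith)
      refine ⟨by linarith, h2, h3, ?_⟩
      intro f hf1 hf2
      have hfx : f ((lo + hi) / 2) = -α := hf1 _ h1
      have hne : L hist ((lo + hi) / 2) ≠ f ((lo + hi) / 2) := by rw [hfx]; exact c
      rw [stdMistakes, if_neg hne, hfx]
      have := h4 f hf1 hf2
      omega

/-- the family of 2-layer leaky-relu neural networks with one input,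
4 hidden neurons and one output neuron has infinite standard optimal mistake bound. -/
theorem stmt5 (α : ℝ) (hα0 : 0 < α) (hα1 : α < 1)
    (reluα : ℝ → ℝ) (hrelu : ∀ t, reluα t = if 0 < t then t else α * t)
    (F : Set (ℝ → ℝ))
    (hF : F = {g | ∃ (a b w : Fin 4 → ℝ) (c : ℝ),
        ∀ x, g x = reluα (c + ∑ i, w i * reluα (a i * x + b i))}) :
    ∀ L : List (ℝ × ℝ) → ℝ → ℝ, ∀ M : ℕ,
      ∃ f ∈ F, ∃ xs : List ℝ, M ≤ stdMistakes L f [] xs := by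
  intro L M
  obtain ⟨h1, h2, h3, h4⟩ := advRun_spec L α hα0 M [] 0 1 (by norm_num)
  set l := (advRun L α M [] 0 1).2.1 with hl
  set u := (advRun L α M [] 0 1).2.2 with hu
  set xs := (advRun L α M [] 0 1).1 with hxs
  set s : ℝ := (u - l) / 2 with hsdef
  have hs : 0 < s := by simp only [hsdef]; linarith
  have h1α : (0:ℝ) < 1 - α ^ 2 := by nlinarith
  set W : ℝ := 2 / ((1 - α ^ 2) * s) with hWdef
  have hW2 : W * ((1 - α ^ 2) * s) = 2 := by
    rw [hWdef]
    field_simp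
  set f : ℝ → ℝ := fun x => reluα (-1 + (W * reluα (x - l) + α * W * reluα (l - x) +
      -W * reluα (x - (l + s)) + -(α * W) * reluα (l + s - x))) with hfdef
  have plateau_low : ∀ x, x ≤ l → f x = -α := by
    intro x hx
    have e1 : reluα (x - l) = α * (x - l) := by
      rw [hrelu, if_neg (not_lt.mpr (by linarith))]
    have e2 : reluα (l - x) = l - x := by
      rw [hrelu]
      split_ifs with hc
      · rfl
      · have hxl : x = l := le_antisymm hx (by push_neg at hc; linarith)
        rw [hxl]; ring
    have e3 : reluα (x - (l + s)) = α * (x - (l + s)) := by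
      rw [hrelu, if_neg (not_lt.mpr (by linarith))]
    have e4 : reluα (l + s - x) = l + s - x := by
      rw [hrelu, if_pos (by linarith)]
    rw [hfdef]
    simp only
    rw [e1, e2, e3, e4]
    have hinner : (-1 + (W * (α * (x - l)) + α * W * (l - x) +
        -W * (α * (x - (l + s))) + -(α * W) * (l + s - x))) = -1 := by ring
    rw [hinner, hrelu, if_neg (by norm_num)]
    ring
  have plateau_high : ∀ x, u ≤ x → f x = 1 := by
    intro x hx
    have hus : u = l + 2 * s := by rw [hsdef]; ring
    have hx' : l + 2 * s ≤ x := by rw [← hus]; exact hx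
    have e1 : reluα (x - l) = x - l := by
      rw [hrelu, if_pos (by linarith)]
    have e2 : reluα (l - x) = α * (l - x) := by
      rw [hrelu, if_neg (not_lt.mpr (by linarith))]
    have e3 : reluα (x - (l + s)) = x - (l + s) := by
      rw [hrelu, if_pos (by linarith)]
    have e4 : reluα (l + s - x) = α * (l + s - x) := by
      rw [hrelu, if_neg (not_lt.mpr (by linarith))]
    rw [hfdef]
    simp only
    rw [e1, e2, e3, e4]
    have hinner : (-1 + (W * (x - l) + α * W * (α * (l - x)) +
        -W * (x - (l + s)) + -(α * W) * (α * (l + s - x)))) = 1 := by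
      linear_combination hW2
    rw [hinner, hrelu, if_pos (by norm_num)]
  refine ⟨f, ?_, xs, h4 f plateau_low plateau_high⟩
  rw [hF]
  refine ⟨![1, -1, 1, -1], ![-l, l, -(l + s), l + s], ![W, α * W, -W, -(α * W)], -1, ?_⟩
  intro x
  rw [hfdef]
  simp only [Fin.sum_univ_four, Matrix.cons_val_zero, Matrix.cons_val_one, Matrix.head_cons,
    Matrix.cons_val_two, Matrix.tail_cons, Matrix.cons_val_three]
  ring_nf
end

section
/- Let Y be a finite set of size k ≥ 2, let F be a family of functions X → Y, and suppose opt_std(F) ≤ M for a natural number M. Then for every natural number η, opt_ag,strong(F, η) ≤ (M · ln 3 + η · ln(3k)) / ln(6/5). In particular, opt_ag,strong(F, η) = O(opt_std(F) + η · ln k). -/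
noncomputable section AgAux
open Classical
set_option linter.unusedSectionVars false

variable {X Y : Type*} [Fintype Y]

/-- history built from `f` on inputs `zs` -/
def agHist (f : X → Y) (zs : List X) : List (X × Y) := zs.map fun z => (z, f z)

@[simp] lemma agHist_nil (f : X → Y) : agHist f [] = [] := rfl

@[simp] lemma agHist_append (f : X → Y) (zs ws : List X) :
    agHist f (zs ++ ws) = agHist f zs ++ agHist f ws := by
  simp [agHist]

lemma agHist_mem {f : X → Y} {zs : List X} {x : X} {y : Y}
    (h : (x, y) ∈ agHist f zs) : y = f x := by
  rcases List.mem_map.mp h with ⟨z, _, hz⟩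
  cases hz; rfl

lemma stdMistakes_nil {L : List (X × Y) → X → Y} {f : X → Y} {hist : List (X × Y)} :
    stdMistakes L f hist [] = 0 := rfl

lemma stdMistakes_cons {L : List (X × Y) → X → Y} {f : X → Y} {hist : List (X × Y)}
    {x : X} {xs : List X} :
    stdMistakes L f hist (x :: xs) =
      (if L hist x = f x then 0 else 1) + stdMistakes L f (hist ++ [(x, f x)]) xs := rfl

lemma stdMistakes_append (L : List (X × Y) → X → Y) (f : X → Y) :
    ∀ (ys zs : List X) (hist : List (X × Y)),
      stdMistakes L f hist (ys ++ zs) =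
        stdMistakes L f hist ys + stdMistakes L f (hist ++ agHist f ys) zs
  | [], zs, hist => by simp [stdMistakes_nil]
  | y :: ys, zs, hist => by
      simp only [List.cons_append, stdMistakes_cons,
        stdMistakes_append L f ys zs (hist ++ [(y, f y)])]
      simp [agHist, add_assoc]

/-- snoc form -/
lemma stdMistakes_snoc (L : List (X × Y) → X → Y) (f : X → Y) (zs : List X) (x : X) :
    stdMistakes L f [] (zs ++ [x]) =
      stdMistakes L f [] zs + (if L (agHist f zs) x = f x then 0 else 1) := by
  rw [stdMistakes_append L f zs [x] []]
  simp [stdMistakes_cons, stdMistakes_nil]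

/-- branching of one copy upon feedback `a` on input `x` -/
def agBranches (k : ℕ) (L0 : List (X × Y) → X → Y) (x : X) (a : Y)
    (c : List (X × Y) × ℝ) : List (List (X × Y) × ℝ) :=
  if L0 c.1 x = a then [c]
  else (c.1 ++ [(x, a)], c.2 / 3) ::
    ((Finset.univ.erase a).toList.map fun y => (c.1 ++ [(x, y)], c.2 / (3 * k)))

def agUpd (k : ℕ) (L0 : List (X × Y) → X → Y) (x : X) (a : Y)
    (S : List (List (X × Y) × ℝ)) : List (List (X × Y) × ℝ) :=
  S.flatMap (agBranches k L0 x a)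

def agPhi (S : List (List (X × Y) × ℝ)) : ℝ := (S.map Prod.snd).sum

def agMass (L0 : List (X × Y) → X → Y) (S : List (List (X × Y) × ℝ)) (x : X) (y : Y) : ℝ :=
  (S.map fun c => if L0 c.1 x = y then c.2 else 0).sum

def agPred (L0 : List (X × Y) → X → Y) (y0 : Y) (S : List (List (X × Y) × ℝ)) (x : X) : Y :=
  if h : ∃ y : Y, agPhi S < 2 * agMass L0 S x y then h.choose else y0

def agRun (k : ℕ) (L0 : List (X × Y) → X → Y) :
    List X × List (List (X × Y) × ℝ) → List (X × Y) → List X × List (List (X × Y) × ℝ)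
  | p, [] => p
  | p, e :: H =>
      agRun k L0 (if e.1 ∈ p.1 then p else (e.1 :: p.1, agUpd k L0 e.1 e.2 p.2)) H

def agState (k : ℕ) (L0 : List (X × Y) → X → Y) (hist : List (X × Y)) :
    List X × List (List (X × Y) × ℝ) :=
  agRun k L0 ([], [([], 1)]) hist

def agLearner (k : ℕ) (L0 : List (X × Y) → X → Y) (y0 : Y)
    (hist : List (X × Y)) (x : X) : Y :=
  if h : ∃ y, (x, y) ∈ hist then h.choose else agPred L0 y0 (agState k L0 hist).2 x

lemma agRun_append (k : ℕ) (L0 : List (X × Y) → X → Y) :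
    ∀ (H H' : List (X × Y)) (p : List X × List (List (X × Y) × ℝ)),
      agRun k L0 p (H ++ H') = agRun k L0 (agRun k L0 p H) H'
  | [], H', p => rfl
  | e :: H, H', p => by
      simp only [List.cons_append, agRun]
      exact agRun_append k L0 H H' _

lemma agState_snoc (k : ℕ) (L0 : List (X × Y) → X → Y) (hist : List (X × Y)) (x : X) (y : Y) :
    agState k L0 (hist ++ [(x, y)]) =
      (if x ∈ (agState k L0 hist).1 then agState k L0 hist
       else (x :: (agState k L0 hist).1,
             agUpd k L0 x y (agState k L0 hist).2)) := by
  rw [agState, agRun_append]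
  rfl


lemma agPhi_nonneg {S : List (List (X × Y) × ℝ)} (hS : ∀ c ∈ S, 0 ≤ c.2) :
    0 ≤ agPhi S := by
  apply List.sum_nonneg
  intro r hr
  rcases List.mem_map.mp hr with ⟨c, hc, rfl⟩
  exact hS c hc

lemma agMass_nonneg {L0 : List (X × Y) → X → Y} {S : List (List (X × Y) × ℝ)}
    (hS : ∀ c ∈ S, 0 ≤ c.2) (x : X) (y : Y) : 0 ≤ agMass L0 S x y := by
  apply List.sum_nonneg
  intro r hr
  rcases List.mem_map.mp hr with ⟨c, hc, rfl⟩
  split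
  · exact hS c hc
  · exact le_refl 0

lemma agPhi_eq_sum_mass (L0 : List (X × Y) → X → Y) (S : List (List (X × Y) × ℝ)) (x : X) :
    agPhi S = ∑ y : Y, agMass L0 S x y := by
  induction S with
  | nil => simp [agPhi, agMass]
  | cons c S ih =>
      simp only [agPhi, agMass, List.map_cons, List.sum_cons] at *
      rw [ih, Finset.sum_add_distrib, Finset.sum_ite_eq Finset.univ (L0 c.1 x) (fun _ => c.2)]
      simp

lemma agMass_le_phi {L0 : List (X × Y) → X → Y} {S : List (List (X × Y) × ℝ)}
    (hS : ∀ c ∈ S, 0 ≤ c.2) (x : X) (y : Y) : agMass L0 S x y ≤ agPhi S := by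
  apply List.sum_le_sum
  intro c hc
  split
  · exact le_refl _
  · exact hS c hc

lemma agMass_pair {L0 : List (X × Y) → X → Y} {S : List (List (X × Y) × ℝ)}
    (hS : ∀ c ∈ S, 0 ≤ c.2) (x : X) {y y' : Y} (hyy : y ≠ y') :
    agMass L0 S x y + agMass L0 S x y' ≤ agPhi S := by
  rw [agPhi_eq_sum_mass L0 S x]
  have h1 : agMass L0 S x y + agMass L0 S x y' = ∑ z ∈ ({y, y'} : Finset Y), agMass L0 S x z := by
    rw [Finset.sum_pair hyy]
  rw [h1]
  apply Finset.sum_le_sum_of_subset_of_nonneg (Finset.subset_univ _)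
  intro z _ _
  exact agMass_nonneg hS x z


lemma agPhi_flatMap (b : (List (X × Y) × ℝ) → List (List (X × Y) × ℝ))
    (S : List (List (X × Y) × ℝ)) :
    agPhi (S.flatMap b) = (S.map (fun c => agPhi (b c))).sum := by
  induction S with
  | nil => simp [agPhi]
  | cons c S ih => simp [agPhi, List.flatMap_cons, List.map_append, List.sum_append] at *; rw [ih]

lemma agPhi_branches {k : ℕ} (hk : 2 ≤ k) (hcard : Fintype.card Y = k)
    (L0 : List (X × Y) → X → Y) (x : X) (a : Y) (c : List (X × Y) × ℝ) (hc : 0 ≤ c.2) :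
    agPhi (agBranches k L0 x a c) ≤
      2 / 3 * c.2 + 1 / 3 * (if L0 c.1 x = a then c.2 else 0) := by
  unfold agBranches
  split
  · simp [agPhi]; linarith
  · simp only [if_neg ‹¬ L0 c.1 x = a›, agPhi, List.map_cons, List.sum_cons,
      List.map_map]
    have hmap : (((Finset.univ.erase a).toList).map
        ((Prod.snd : List (X × Y) × ℝ → ℝ) ∘ fun y => (c.1 ++ [(x, y)], c.2 / (3 * k)))).sum
        = ((k : ℝ) - 1) * (c.2 / (3 * k)) := by
      have : ((Prod.snd : List (X × Y) × ℝ → ℝ) ∘ fun y : Y => (c.1 ++ [(x, y)], c.2 / (3 * k)))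
          = fun _ => c.2 / (3 * k) := rfl
      rw [this, List.map_const', List.sum_replicate, Finset.length_toList,
        Finset.card_erase_of_mem (Finset.mem_univ a), Finset.card_univ, hcard, nsmul_eq_mul]
      rw [Nat.cast_sub (by omega)]
      norm_num
    rw [hmap]
    have hk0 : (0 : ℝ) < k := by positivity
    have h1 : ((k : ℝ) - 1) * (c.2 / (3 * k)) ≤ 1 / 3 * c.2 := by
      rw [mul_div_assoc', div_le_iff₀ (by positivity : (0:ℝ) < 3 * (k:ℝ))]
      nlinarith
    linarith


lemma agPhi_upd {k : ℕ} (hk : 2 ≤ k) (hcard : Fintype.card Y = k)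
    (L0 : List (X × Y) → X → Y) (x : X) (a : Y) {S : List (List (X × Y) × ℝ)}
    (hS : ∀ c ∈ S, 0 ≤ c.2) :
    agPhi (agUpd k L0 x a S) ≤ 2 / 3 * agPhi S + 1 / 3 * agMass L0 S x a := by
  rw [agUpd, agPhi_flatMap]
  have h1 : (S.map (fun c => agPhi (agBranches k L0 x a c))).sum ≤
      (S.map (fun c => 2 / 3 * c.2 + 1 / 3 * (if L0 c.1 x = a then c.2 else 0))).sum :=
    List.sum_le_sum fun c hc => agPhi_branches hk hcard L0 x a c (hS c hc)
  refine h1.trans (le_of_eq ?_)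
  clear h1 hS
  rw [agPhi, agMass]
  induction S with
  | nil => simp
  | cons c S ih =>
      simp only [List.map_cons, List.sum_cons]
      rw [ih]
      ring

/-- nonnegativity is preserved -/
lemma agUpd_nonneg {k : ℕ} {L0 : List (X × Y) → X → Y} {x : X} {a : Y}
    {S : List (List (X × Y) × ℝ)} (hS : ∀ c ∈ S, 0 ≤ c.2) :
    ∀ c' ∈ agUpd k L0 x a S, 0 ≤ c'.2 := by
  intro c' hc'
  rcases List.mem_flatMap.mp hc' with ⟨c, hc, hb⟩
  have h0 := hS c hc
  unfold agBranches at hb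
  split at hb
  · simp at hb; subst hb; exact h0
  · rcases List.mem_cons.mp hb with h | h
    · subst h; positivity
    · rcases List.mem_map.mp h with ⟨y, _, rfl⟩
      positivity


lemma agInv (k : ℕ) (hk : 2 ≤ k) (L0 : List (X × Y) → X → Y) (f g : X → Y)
    (ps : List X) :
    (∀ x, x ∈ (agState k L0 (agHist g ps)).1 ↔ x ∈ ps) ∧
    (∀ c ∈ (agState k L0 (agHist g ps)).2, 0 ≤ c.2) ∧
    (∃ c ∈ (agState k L0 (agHist g ps)).2, ∃ zs ws : List X, ∃ aa : ℕ,
      c.1 = agHist f zs ∧ c.2 = (1/3 : ℝ) ^ aa * (1/(3*(k:ℝ))) ^ ws.length ∧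
      aa ≤ stdMistakes L0 f [] zs ∧ ws.Nodup ∧ (∀ w ∈ ws, f w ≠ g w) ∧
      (∀ w ∈ ws, w ∈ ps)) := by
  induction ps using List.reverseRecOn with
  | nil =>
      refine ⟨by simp [agState, agRun], ?_, ?_⟩
      · intro c hc
        simp only [agState, agHist_nil, agRun, List.mem_singleton] at hc
        subst hc; norm_num
      · refine ⟨([], 1), by simp [agState, agRun], [], [], 0, by simp [agHist], by norm_num,
          by simp [stdMistakes_nil], List.nodup_nil, by simp, by simp⟩
  | append_singleton ps x ih =>
      obtain ⟨ih1, ih2, c, hc, zs, ws, aa, hc1, hc2, haa, hnd, hws, hwsps⟩ := ih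
      have hsnoc : agHist g (ps ++ [x]) = agHist g ps ++ [(x, g x)] := by simp [agHist]
      rw [hsnoc, agState_snoc]
      by_cases hx : x ∈ (agState k L0 (agHist g ps)).1
      · rw [if_pos hx]
        have hxps : x ∈ ps := (ih1 x).mp hx
        refine ⟨?_, ih2, c, hc, zs, ws, aa, hc1, hc2, haa, hnd, hws, ?_⟩
        · intro x'
          rw [ih1 x', List.mem_append, List.mem_singleton]
          constructor
          · exact Or.inl
          · rintro (h | rfl)
            · exact h
            · exact hxps
        · intro w hw; exact List.mem_append_left _ (hwsps w hw)
      · rw [if_neg hx]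
        have hxps : x ∉ ps := fun h => hx ((ih1 x).mpr h)
        refine ⟨?_, ?_, ?_⟩
        · intro x'
          simp only [List.mem_cons, ih1 x', List.mem_append, List.mem_singleton]
          tauto
        · exact agUpd_nonneg ih2
        · -- true copy update
          by_cases hr : L0 c.1 x = g x
          · -- copy is right: unchanged
            refine ⟨c, ?_, zs, ws, aa, hc1, hc2, haa, hnd, hws, ?_⟩
            · apply List.mem_flatMap.mpr
              exact ⟨c, hc, by simp [agBranches, hr]⟩
            · intro w hw; exact List.mem_append_left _ (hwsps w hw)
          · by_cases hfx : f x = g x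
            · -- clean branch
              refine ⟨(c.1 ++ [(x, g x)], c.2 / 3), ?_, zs ++ [x], ws, aa + 1, ?_, ?_, ?_,
                hnd, hws, fun w hw => List.mem_append_left _ (hwsps w hw)⟩
              · apply List.mem_flatMap.mpr
                refine ⟨c, hc, ?_⟩
                simp [agBranches, hr]
              · simp [hc1, agHist, hfx]
              · simp only [hc2, pow_succ]
                ring
              · rw [stdMistakes_snoc]
                rw [if_neg (by rw [← hc1]; rw [hfx]; exact hr)]
                omega
            · -- noisy branch
              refine ⟨(c.1 ++ [(x, f x)], c.2 / (3 * k)), ?_, zs ++ [x], ws ++ [x], aa, ?_, ?_, ?_,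
                ?_, ?_, ?_⟩
              · apply List.mem_flatMap.mpr
                refine ⟨c, hc, ?_⟩
                unfold agBranches
                rw [if_neg hr]
                apply List.mem_cons_of_mem
                apply List.mem_map.mpr
                exact ⟨f x, by simp [Finset.mem_toList, Finset.mem_erase, hfx], rfl⟩
              · simp [hc1, agHist]
              · simp only [hc2, List.length_append, List.length_singleton, pow_succ]
                ring
              · rw [stdMistakes_snoc]
                omega
              · rw [List.nodup_append]
                refine ⟨hnd, List.nodup_singleton x, ?_⟩
                rintro a ha b hb rfl
                rw [List.mem_singleton] at hb; subst hb
                exact hxps (hwsps _ ha)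
              · intro w hw
                rcases List.mem_append.mp hw with h | h
                · exact hws w h
                · rw [List.mem_singleton] at h; subst h; exact hfx
              · intro w hw
                rcases List.mem_append.mp hw with h | h
                · exact List.mem_append_left _ (hwsps w h)
                · exact List.mem_append_right _ h


lemma agStep (k : ℕ) (hk : 2 ≤ k) (hcard : Fintype.card Y = k)
    (L0 : List (X × Y) → X → Y) (y0 : Y) (g : X → Y) (ps : List X) (x : X) :
    agPhi (agState k L0 (agHist g (ps ++ [x]))).2 ≤
      (if agLearner k L0 y0 (agHist g ps) x = g x then 1 else (5/6 : ℝ)) *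
        agPhi (agState k L0 (agHist g ps)).2 := by
  obtain ⟨ih1, ih2, -⟩ := agInv k hk L0 g g ps
  have hsnoc : agHist g (ps ++ [x]) = agHist g ps ++ [(x, g x)] := by simp [agHist]
  rw [hsnoc, agState_snoc]
  by_cases hx : x ∈ (agState k L0 (agHist g ps)).1
  · rw [if_pos hx]
    have hex : ∃ y, (x, y) ∈ agHist g ps :=
      ⟨g x, List.mem_map.mpr ⟨x, (ih1 x).mp hx, rfl⟩⟩
    have hL : agLearner k L0 y0 (agHist g ps) x = g x := by
      rw [agLearner, dif_pos hex]
      exact agHist_mem hex.choose_spec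
    rw [if_pos hL, one_mul]
  · rw [if_neg hx]
    have hxps : x ∉ ps := fun h => hx ((ih1 x).mpr h)
    have hnex : ¬ ∃ y, (x, y) ∈ agHist g ps := by
      rintro ⟨y, hy⟩
      rcases List.mem_map.mp hy with ⟨z, hz, hzz⟩
      exact hxps (by cases hzz; exact hz)
    have hLpred : agLearner k L0 y0 (agHist g ps) x = agPred L0 y0 (agState k L0 (agHist g ps)).2 x := by
      rw [agLearner, dif_neg hnex]
    have hupd := agPhi_upd hk hcard L0 x (g x) ih2
    have hphi0 : 0 ≤ agPhi (agState k L0 (agHist g ps)).2 := agPhi_nonneg ih2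
    by_cases hpred : agPred L0 y0 (agState k L0 (agHist g ps)).2 x = g x
    · rw [if_pos (by rw [hLpred]; exact hpred), one_mul]
      have hm := agMass_le_phi (L0 := L0) ih2 x (g x)
      show agPhi (agUpd k L0 x (g x) (agState k L0 (agHist g ps)).2) ≤ _
      linarith
    · rw [if_neg (by rw [hLpred]; exact hpred)]
      have hmass : 2 * agMass L0 (agState k L0 (agHist g ps)).2 x (g x) ≤
          agPhi (agState k L0 (agHist g ps)).2 := by
        by_contra hlt
        push_neg at hlt
        have hex2 : ∃ y : Y, agPhi (agState k L0 (agHist g ps)).2 <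
            2 * agMass L0 (agState k L0 (agHist g ps)).2 x y := ⟨g x, hlt⟩
        have hchoose := hex2.choose_spec
        have hpr : agPred L0 y0 (agState k L0 (agHist g ps)).2 x = hex2.choose := by
          rw [agPred, dif_pos hex2]
        have hne : hex2.choose ≠ g x := by
          intro h; exact hpred (by rw [hpr, h])
        have hpair := agMass_pair (L0 := L0) ih2 x hne
        linarith
      show agPhi (agUpd k L0 x (g x) (agState k L0 (agHist g ps)).2) ≤ _
      linarith

lemma agDecay (k : ℕ) (hk : 2 ≤ k) (hcard : Fintype.card Y = k)
    (L0 : List (X × Y) → X → Y) (y0 : Y) (g : X → Y) :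
    ∀ (xs ps : List X),
      agPhi (agState k L0 (agHist g (ps ++ xs))).2 ≤
        (5/6 : ℝ) ^ (stdMistakes (agLearner k L0 y0) g (agHist g ps) xs) *
          agPhi (agState k L0 (agHist g ps)).2
  | [], ps => by simp [stdMistakes_nil]
  | x :: xs, ps => by
      have hassoc : ps ++ x :: xs = (ps ++ [x]) ++ xs := by simp
      have hIH := agDecay k hk hcard L0 y0 g xs (ps ++ [x])
      have hstep := agStep k hk hcard L0 y0 g ps x
      have hphi0 : 0 ≤ agPhi (agState k L0 (agHist g ps)).2 :=
        agPhi_nonneg (agInv k hk L0 g g ps).2.1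
      have hhist : agHist g ps ++ [(x, g x)] = agHist g (ps ++ [x]) := by simp [agHist]
      rw [stdMistakes_cons, hassoc, hhist]
      refine hIH.trans ?_
      by_cases hc : agLearner k L0 y0 (agHist g ps) x = g x
      · rw [if_pos hc] at hstep ⊢
        rw [one_mul] at hstep
        simp only [zero_add]
        exact mul_le_mul_of_nonneg_left hstep (by positivity)
      · rw [if_neg hc] at hstep ⊢
        calc (5/6 : ℝ) ^ (stdMistakes (agLearner k L0 y0) g (agHist g (ps ++ [x])) xs) *
              agPhi (agState k L0 (agHist g (ps ++ [x]))).2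
            ≤ (5/6 : ℝ) ^ (stdMistakes (agLearner k L0 y0) g (agHist g (ps ++ [x])) xs) *
              ((5/6) * agPhi (agState k L0 (agHist g ps)).2) :=
              mul_le_mul_of_nonneg_left hstep (by positivity)
          _ = (5/6 : ℝ) ^ (1 + stdMistakes (agLearner k L0 y0) g (agHist g (ps ++ [x])) xs) *
              agPhi (agState k L0 (agHist g ps)).2 := by
              rw [pow_add, pow_one]; ring


end AgAux

/-- if opt_std(F) ≤ M and the codomain has size k ≥ 2, then the strong
agnostic mistake bound with noise η is at most (M ln 3 + η ln(3k)) / ln(6/5). -/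
theorem stmt6 {X Y : Type*} [Fintype Y] (k : ℕ) (hk : 2 ≤ k)
    (hcard : Fintype.card Y = k) (F : Set (X → Y)) (M η : ℕ)
    (hstd : ∃ L : List (X × Y) → X → Y, ∀ f ∈ F, ∀ xs : List X,
      stdMistakes L f [] xs ≤ M) :
    ∃ L : List (X × Y) → X → Y, ∀ g : X → Y,
      (∃ f ∈ F, {x | f x ≠ g x}.Finite ∧ {x | f x ≠ g x}.ncard ≤ η) →
      ∀ xs : List X, (stdMistakes L g [] xs : ℝ) ≤
        (M * Real.log 3 + η * Real.log (3 * k)) / Real.log (6 / 5) := by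

  classical
  obtain ⟨L0, hL0⟩ := hstd
  have hY : Nonempty Y := Fintype.card_pos_iff.mp (by omega)
  obtain ⟨y0⟩ := hY
  refine ⟨agLearner k L0 y0, ?_⟩
  rintro g ⟨f, hfF, hfin, hηcard⟩ xs
  set m := stdMistakes (agLearner k L0 y0) g [] xs with hm
  have hk0 : (0 : ℝ) < (k : ℝ) := by positivity
  have hk0' : (0 : ℝ) < 3 * (k : ℝ) := by positivity
  -- potential decay
  have hdecay := agDecay k hk hcard L0 y0 g xs []
  have hinit : agPhi (agState k L0 (agHist g ([] : List X))).2 = 1 := by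
    simp [agState, agRun, agPhi]
  rw [List.nil_append] at hdecay
  rw [hinit, mul_one] at hdecay
  have hdecay' : agPhi (agState k L0 (agHist g xs)).2 ≤ (5/6 : ℝ) ^ m := by
    simpa [agHist] using hdecay
  -- true copy lower bound
  obtain ⟨-, hnn, c, hc, zs, ws, aa, hc1, hc2, haa, hnd, hws, -⟩ := agInv k hk L0 f g xs
  have hlow : c.2 ≤ agPhi (agState k L0 (agHist g xs)).2 := by
    apply List.single_le_sum
    · intro r hr
      rcases List.mem_map.mp hr with ⟨c', hc', rfl⟩
      exact hnn c' hc'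
    · exact List.mem_map_of_mem hc
  have haaM : aa ≤ M := le_trans haa (hL0 f hfF zs)
  have hwsη : ws.length ≤ η := by
    have h1 : ws.toFinset.card = ws.length := List.toFinset_card_of_nodup hnd
    have h2 : (↑ws.toFinset : Set X) ⊆ {x | f x ≠ g x} := by
      intro w hw
      exact hws w (List.mem_toFinset.mp hw)
    have h3 : (↑ws.toFinset : Set X).ncard ≤ {x | f x ≠ g x}.ncard :=
      Set.ncard_le_ncard h2 hfin
    rw [Set.ncard_coe_finset, h1] at h3
    omega
  have hkey : (1/3 : ℝ) ^ M * (1/(3*(k:ℝ))) ^ η ≤ (5/6 : ℝ) ^ m := by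
    have hb1 : (1/3 : ℝ) ^ M ≤ (1/3 : ℝ) ^ aa :=
      pow_le_pow_of_le_one (by norm_num) (by norm_num) haaM
    have hb2 : (1/(3*(k:ℝ))) ^ η ≤ (1/(3*(k:ℝ))) ^ ws.length :=
      pow_le_pow_of_le_one (by positivity)
        (by
          rw [div_le_one hk0']
          have : (1:ℝ) ≤ (k:ℝ) := by exact_mod_cast (by omega : 1 ≤ k)
          linarith) hwsη
    calc (1/3 : ℝ) ^ M * (1/(3*(k:ℝ))) ^ η
        ≤ (1/3 : ℝ) ^ aa * (1/(3*(k:ℝ))) ^ ws.length :=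
          mul_le_mul hb1 hb2 (by positivity) (by positivity)
      _ = c.2 := hc2.symm
      _ ≤ _ := le_trans hlow hdecay'
  -- take logarithms
  have hLHSpos : (0 : ℝ) < (1/3 : ℝ) ^ M * (1/(3*(k:ℝ))) ^ η := by positivity
  have hlog := Real.log_le_log hLHSpos hkey
  rw [Real.log_mul (by positivity) (by positivity), Real.log_pow, Real.log_pow, Real.log_pow] at hlog
  have e1 : Real.log (1/3 : ℝ) = - Real.log 3 := by
    rw [one_div, Real.log_inv]
  have e2 : Real.log (1/(3*(k:ℝ))) = - Real.log (3*(k:ℝ)) := by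
    rw [one_div, Real.log_inv]
  have e3 : Real.log (5/6 : ℝ) = - Real.log (6/5 : ℝ) := by
    rw [show (5/6 : ℝ) = (6/5 : ℝ)⁻¹ by norm_num, Real.log_inv]
  rw [e1, e2, e3] at hlog
  have hlogpos : 0 < Real.log (6/5 : ℝ) := Real.log_pos (by norm_num)
  rw [le_div_iff₀ hlogpos]
  push_cast
  nlinarith [hlog]
end

section
/- Let F be a family of functions X → Y with opt_std(F) ≤ M for a natural number M. Then for every natural number η, opt_ag,strong(F, η) ≤ (M + 1)(η + 1) − 1. -/
section Aux

variable {X Y : Type*}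

open Classical in
/-- mistakes of `L` replayed on a recorded history. -/
noncomputable def repMis (L : List (X × Y) → X → Y) : List (X × Y) → List (X × Y) → ℕ
  | _, [] => 0
  | h, p :: ps => (if L h p.1 = p.2 then 0 else 1) + repMis L (h ++ [p]) ps

open Classical in
noncomputable def agStep_s7 (L : List (X × Y) → X → Y) (M : ℕ)
    (s : List (X × Y) × List (X × Y)) (p : X × Y) : List (X × Y) × List (X × Y) :=
  (s.1 ++ [p],
    if p.1 ∈ s.1.map Prod.fst then s.2
    else if repMis L [] (s.2 ++ [p]) = M + 1 then []
    else s.2 ++ [p])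

noncomputable def agSt (L : List (X × Y) → X → Y) (M : ℕ) (hist : List (X × Y)) :
    List (X × Y) × List (X × Y) :=
  hist.foldl (agStep_s7 L M) ([], [])

open Classical in
noncomputable def agL (L : List (X × Y) → X → Y) (M : ℕ) (hist : List (X × Y)) (x : X) : Y :=
  match hist.find? (fun p => decide (p.1 = x)) with
  | some p => p.2
  | none => L (agSt L M hist).2 x

lemma agSt_fst_aux (L : List (X × Y) → X → Y) (M : ℕ) :
    ∀ (hist : List (X × Y)) (s : List (X × Y) × List (X × Y)),
      (hist.foldl (agStep_s7 L M) s).1 = s.1 ++ hist := by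
  intro hist
  induction hist with
  | nil => intro s; simp
  | cons p ps ih =>
      intro s
      simp only [List.foldl_cons, ih, agStep_s7]
      simp

lemma agSt_fst (L : List (X × Y) → X → Y) (M : ℕ) (hist : List (X × Y)) :
    (agSt L M hist).1 = hist := by
  simpa [agSt] using agSt_fst_aux L M hist ([], [])

lemma agSt_concat (L : List (X × Y) → X → Y) (M : ℕ) (hist : List (X × Y)) (p : X × Y) :
    agSt L M (hist ++ [p]) = agStep_s7 L M (agSt L M hist) p := by
  simp [agSt]

open Classical in
lemma repMis_concat (L : List (X × Y) → X → Y) :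
    ∀ (e : List (X × Y)) (h : List (X × Y)) (p : X × Y),
      repMis L h (e ++ [p]) = repMis L h e + (if L (h ++ e) p.1 = p.2 then 0 else 1) := by
  intro e
  induction e with
  | nil => intro h p; simp [repMis]
  | cons q qs ih =>
      intro h p
      simp only [List.cons_append, repMis, List.append_eq]
      rw [ih (h ++ [q]) p]
      simp [List.append_assoc]
      omega

lemma repMis_eq_std (L : List (X × Y) → X → Y) (f : X → Y) :
    ∀ (e : List (X × Y)) (h : List (X × Y)), (∀ p ∈ e, p.2 = f p.1) →
      repMis L h e = stdMistakes L f h (e.map Prod.fst) := by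
  intro e
  induction e with
  | nil => intro h _; simp [repMis, stdMistakes]
  | cons q qs ih =>
      intro h hq
      have h2 : q.2 = f q.1 := hq q (by simp)
      have hqe : q = (q.1, f q.1) := by
        rw [← h2]
      simp only [repMis, List.map_cons, stdMistakes, h2]
      rw [ih (h ++ [q]) (fun p hp => hq p (by simp [hp]))]
      rw [← hqe, h2]

end Aux

open Classical in
lemma agL_bound {X Y : Type*} (L : List (X × Y) → X → Y) (M : ℕ) (f g : X → Y)
    (hf : ∀ xs : List X, stdMistakes L f [] xs ≤ M)
    (hfin : {x | f x ≠ g x}.Finite) :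
    ∀ (xs : List X) (hist : List (X × Y)),
      (∀ p ∈ hist, p.2 = g p.1) →
      (∀ p ∈ (agSt L M hist).2, p ∈ hist) →
      repMis L [] (agSt L M hist).2 ≤ M →
      stdMistakes (agL L M) g hist xs ≤
        (M + 1) * ({x | f x ≠ g x} \
            ({a | a ∈ hist.map Prod.fst} \ {a | a ∈ (agSt L M hist).2.map Prod.fst})).ncard
          + (M - repMis L [] (agSt L M hist).2) := by
  intro xs
  induction xs with
  | nil => intro hist _ _ _; simp [stdMistakes]
  | cons x xs ih =>
    intro hist hg hsub hk
    set e := (agSt L M hist).2 with he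
    set k := repMis L [] e with hkdef
    set N := {x | f x ≠ g x} with hN
    set D := {a | a ∈ hist.map Prod.fst} \ {a | a ∈ e.map Prod.fst} with hD
    have hNDfin : (N \ D).Finite := hfin.subset Set.diff_subset
    have h2 : (agSt L M (hist ++ [(x, g x)])).2 =
        (if x ∈ hist.map Prod.fst then e
         else if repMis L [] (e ++ [(x, g x)]) = M + 1 then []
         else e ++ [(x, g x)]) := by
      rw [agSt_concat]
      simp only [agStep_s7, agSt_fst, ← he]
    have hgrow : ∀ p ∈ hist ++ [(x, g x)], p.2 = g p.1 := by
      intro p hp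
      rcases List.mem_append.mp hp with h | h
      · exact hg p h
      · simp at h; subst h; rfl
    have hconcat : repMis L [] (e ++ [(x, g x)]) = k + (if L e x = g x then 0 else 1) := by
      rw [repMis_concat]; simp [hkdef]
    simp only [stdMistakes]
    by_cases hx : x ∈ hist.map Prod.fst
    · -- memory case: prediction is correct
      have hfind : (hist.find? (fun p => decide (p.1 = x))).isSome := by
        rw [List.find?_isSome]
        obtain ⟨p, hp, hp1⟩ := List.mem_map.mp hx
        exact ⟨p, hp, by simp [hp1]⟩
      obtain ⟨q, hq⟩ := Option.isSome_iff_exists.mp hfind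
      have hq1 : q.1 = x := by simpa using List.find?_some hq
      have hqh : q ∈ hist := List.mem_of_find?_eq_some hq
      have hcorrect : agL L M hist x = g x := by
        rw [agL, hq]
        show q.2 = g x
        rw [hg q hqh, hq1]
      rw [if_pos hcorrect, zero_add]
      have he' : (agSt L M (hist ++ [(x, g x)])).2 = e := by rw [h2, if_pos hx]
      have hb := ih (hist ++ [(x, g x)]) hgrow
        (by rw [he']; intro p hp; exact List.mem_append_left _ (hsub p hp))
        (by rw [he']; exact hk)
      rw [he', ← hkdef] at hb
      refine le_trans hb ?_
      have hsubD : N \ ({a | a ∈ (hist ++ [(x, g x)]).map Prod.fst} \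
          {a | a ∈ e.map Prod.fst}) ⊆ N \ D := by
        intro a ha
        refine ⟨ha.1, fun haD => ha.2 ⟨?_, haD.2⟩⟩
        simp only [List.map_append, List.mem_append, Set.mem_setOf_eq]
        exact Or.inl haD.1
      have := Set.ncard_le_ncard hsubD hNDfin
      have hmul := Nat.mul_le_mul_left (M + 1) this
      omega
    · -- fresh case
      have hfind : hist.find? (fun p => decide (p.1 = x)) = none := by
        rw [List.find?_eq_none]
        intro p hp
        simp only [decide_eq_true_eq]
        exact fun h => hx (List.mem_map.mpr ⟨p, hp, h⟩)
      have hpred : agL L M hist x = L e x := by rw [agL, hfind]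
      -- D grows (or stays) in all fresh subcases where epoch is extended
      by_cases hc : L e x = g x
      · -- correct prediction
        have hcM : repMis L [] (e ++ [(x, g x)]) ≠ M + 1 := by
          rw [hconcat, if_pos hc]; omega
        have he' : (agSt L M (hist ++ [(x, g x)])).2 = e ++ [(x, g x)] := by
          rw [h2, if_neg hx, if_neg hcM]
        have hb := ih (hist ++ [(x, g x)]) hgrow
          (by rw [he']; intro p hp
              rcases List.mem_append.mp hp with h | h
              · exact List.mem_append_left _ (hsub p h)
              · exact List.mem_append_right _ h)
          (by rw [he', hconcat, if_pos hc]; omega)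
        rw [he', hconcat, if_pos hc, Nat.add_zero] at hb
        rw [if_pos (hpred.trans hc), zero_add]
        refine le_trans hb ?_
        have hsubD : N \ ({a | a ∈ (hist ++ [(x, g x)]).map Prod.fst} \
            {a | a ∈ (e ++ [(x, g x)]).map Prod.fst}) ⊆ N \ D := by
          intro a ha
          refine ⟨ha.1, fun haD => ha.2 ⟨?_, fun hmem => ?_⟩⟩
          · simp only [List.map_append, List.mem_append, Set.mem_setOf_eq]
            exact Or.inl haD.1
          · simp only [Set.mem_setOf_eq, List.map_append, List.mem_append] at hmem
            rcases hmem with h | h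
            · exact haD.2 h
            · simp only [List.map_cons, List.map_nil, List.mem_singleton] at h
              exact hx (h ▸ haD.1)
        have := Set.ncard_le_ncard hsubD hNDfin
        have hmul := Nat.mul_le_mul_left (M + 1) this
        omega
      · -- mistake
        rw [if_neg (by rw [hpred]; exact hc)]
        have hcval : repMis L [] (e ++ [(x, g x)]) = k + 1 := by
          rw [hconcat, if_neg hc]
        by_cases hrst : repMis L [] (e ++ [(x, g x)]) = M + 1
        · -- restart: epoch completed, consumes a fresh noisy point
          have hkM : k = M := by omega
          have he' : (agSt L M (hist ++ [(x, g x)])).2 = [] := by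
            rw [h2, if_neg hx, if_pos hrst]
          -- find a noisy point in the epoch
          have hnoisy : ∃ p ∈ e ++ [(x, g x)], f p.1 ≠ g p.1 := by
            by_contra hno
            push_neg at hno
            have hlab : ∀ p ∈ e ++ [(x, g x)], p.2 = f p.1 := by
              intro p hp
              have h1 : p.2 = g p.1 := by
                rcases List.mem_append.mp hp with h | h
                · exact hg p (hsub p h)
                · simp at h; subst h; rfl
              rw [h1, ← hno p hp]
            have := repMis_eq_std L f (e ++ [(x, g x)]) [] hlab
            rw [hrst] at this
            have := hf ((e ++ [(x, g x)]).map Prod.fst)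
            omega
          obtain ⟨p, hp, hpz⟩ := hnoisy
          set z := p.1 with hz
          have hzN : z ∈ N := hpz
          have hzD : z ∉ D := by
            rcases List.mem_append.mp hp with h | h
            · exact fun hd => hd.2 (List.mem_map.mpr ⟨p, h, rfl⟩)
            · simp only [List.mem_singleton] at h
              have hzx : z = x := by rw [hz, h]
              intro hd
              exact hx (hzx ▸ hd.1)
          have hzND : z ∈ N \ D := ⟨hzN, hzD⟩
          -- new D contains z
          have hsubD : N \ ({a | a ∈ (hist ++ [(x, g x)]).map Prod.fst} \
              {a | a ∈ ([] : List (X × Y)).map Prod.fst}) ⊆ (N \ D) \ {z} := by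
            intro a ha
            have haD' : a ∉ {a | a ∈ (hist ++ [(x, g x)]).map Prod.fst} := by
              intro hmem
              exact ha.2 ⟨hmem, by simp⟩
            refine ⟨⟨ha.1, fun hd => haD' ?_⟩, fun hza => haD' ?_⟩
            · simp only [List.map_append, List.mem_append, Set.mem_setOf_eq]
              exact Or.inl hd.1
            · -- a = z, but z is in hist ++ [(x, g x)] inputs
              simp only [Set.mem_singleton_iff] at hza
              subst hza
              simp only [List.map_append, List.mem_append, Set.mem_setOf_eq]
              rcases List.mem_append.mp hp with h | h
              · exact Or.inl (List.mem_map.mpr ⟨p, hsub p h, rfl⟩)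
              · simp only [List.mem_singleton] at h
                have hzx : z = x := by rw [hz, h]
                right
                simp [hzx]
          have hb := ih (hist ++ [(x, g x)]) hgrow
            (by rw [he']; intro p hp; simp at hp)
            (by rw [he']; simp [repMis])
          rw [he'] at hb
          simp only [repMis] at hb
          have hcard1 : ((N \ D) \ {z}).ncard = (N \ D).ncard - 1 :=
            Set.ncard_diff_singleton_of_mem hzND
          have hpos : 0 < (N \ D).ncard := (Set.ncard_pos hNDfin).mpr ⟨z, hzND⟩
          have hle : (N \ ({a | a ∈ (hist ++ [(x, g x)]).map Prod.fst} \
              {a | a ∈ ([] : List (X × Y)).map Prod.fst})).ncard ≤ (N \ D).ncard - 1 := by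
            rw [← hcard1]
            exact Set.ncard_le_ncard hsubD (hNDfin.subset Set.diff_subset)
          obtain ⟨B0, hB0⟩ : ∃ B0, (N \ D).ncard = B0 + 1 :=
            ⟨(N \ D).ncard - 1, by omega⟩
          have hle' : (N \ ({a | a ∈ (hist ++ [(x, g x)]).map Prod.fst} \
              {a | a ∈ ([] : List (X × Y)).map Prod.fst})).ncard ≤ B0 := by omega
          have hmul := Nat.mul_le_mul_left (M + 1) hle'
          rw [hB0, Nat.mul_add, Nat.mul_one]
          omega
        · -- no restart: epoch extended, counter bumped
          have he' : (agSt L M (hist ++ [(x, g x)])).2 = e ++ [(x, g x)] := by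
            rw [h2, if_neg hx, if_neg hrst]
          have hk1 : k + 1 ≤ M := by omega
          have hb := ih (hist ++ [(x, g x)]) hgrow
            (by rw [he']; intro p hp
                rcases List.mem_append.mp hp with h | h
                · exact List.mem_append_left _ (hsub p h)
                · exact List.mem_append_right _ h)
            (by rw [he', hcval]; exact hk1)
          rw [he', hcval] at hb
          refine le_trans (Nat.add_le_add_left hb 1) ?_
          have hsubD : N \ ({a | a ∈ (hist ++ [(x, g x)]).map Prod.fst} \
              {a | a ∈ (e ++ [(x, g x)]).map Prod.fst}) ⊆ N \ D := by
            intro a ha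
            refine ⟨ha.1, fun haD => ha.2 ⟨?_, fun hmem => ?_⟩⟩
            · simp only [List.map_append, List.mem_append, Set.mem_setOf_eq]
              exact Or.inl haD.1
            · simp only [Set.mem_setOf_eq, List.map_append, List.mem_append] at hmem
              rcases hmem with h | h
              · exact haD.2 h
              · simp only [List.map_cons, List.map_nil, List.mem_singleton] at h
                exact hx (h ▸ haD.1)
          have := Set.ncard_le_ncard hsubD hNDfin
          have hmul := Nat.mul_le_mul_left (M + 1) this
          omega


/-- if opt_std(F) ≤ M, then the strong agnostic mistake bound with
noise η is at most (M + 1)(η + 1) − 1. -/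
theorem stmt7 {X Y : Type*} (F : Set (X → Y)) (M η : ℕ)
    (hstd : ∃ L : List (X × Y) → X → Y, ∀ f ∈ F, ∀ xs : List X,
      stdMistakes L f [] xs ≤ M) :
    ∃ L : List (X × Y) → X → Y, ∀ g : X → Y,
      (∃ f ∈ F, {x | f x ≠ g x}.Finite ∧ {x | f x ≠ g x}.ncard ≤ η) →
      ∀ xs : List X, stdMistakes L g [] xs ≤ (M + 1) * (η + 1) - 1 := by
  obtain ⟨L, hL⟩ := hstd
  refine ⟨agL L M, ?_⟩
  rintro g ⟨f, hfF, hfin, hcard⟩ xs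
  have hst0 : agSt L M ([] : List (X × Y)) = ([], []) := rfl
  have hb := agL_bound L M f g (hL f hfF) hfin xs []
    (by simp) (by rw [hst0]; simp) (by rw [hst0]; simp [repMis])
  rw [hst0] at hb
  simp only [repMis] at hb
  have hset : ({x | f x ≠ g x} \
      ({a | a ∈ ([] : List (X × Y)).map Prod.fst} \
        {a | a ∈ ([] : List (X × Y)).map Prod.fst})).ncard = {x | f x ≠ g x}.ncard := by
    congr 1
    simp
  rw [hset] at hb
  have hmul := Nat.mul_le_mul_left (M + 1) hcard
  have : (M + 1) * (η + 1) = (M + 1) * η + (M + 1) := by ring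
  omega
end

section
/- For each real x > 0 define f_x : ℝ_{>0} → {0,1} by f_x(d) = ⌊dx⌋ − 2⌊dx/2⌋ (so f_x(d) is the parity of ⌊dx⌋), and let F = {f_x : x > 0}. Then opt_std(F) = ∞: for every deterministic learner and every natural number M, there exists x > 0 such that the learner makes at least M mistakes on the input sequence 2, 4, 8, …, 2^M when the hidden function is f_x. -/
namespace Stmt14Aux

/-- Forced history of (input, answer) pairs for learner `L`. -/
def hist (L : List (ℝ × ℤ) → ℝ → ℤ) : ℕ → List (ℝ × ℤ)
  | 0 => []
  | i + 1 => hist L i ++ [((2:ℝ)^(i+1), if L (hist L i) ((2:ℝ)^(i+1)) = 0 then 1 else 0)]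

/-- Adversarial bit: the opposite parity of the learner's prediction. -/
def bit (L : List (ℝ × ℤ) → ℝ → ℤ) (i : ℕ) : ℤ :=
  if L (hist L i) ((2:ℝ)^(i+1)) = 0 then 1 else 0

variable {L : List (ℝ × ℤ) → ℝ → ℤ}

lemma bit_nonneg (i : ℕ) : 0 ≤ bit L i := by unfold bit; split <;> norm_num

lemma bit_le_one (i : ℕ) : bit L i ≤ 1 := by unfold bit; split <;> norm_num

lemma bit_ne (i : ℕ) : bit L i ≠ L (hist L i) ((2:ℝ)^(i+1)) := by
  unfold bit
  split
  · rename_i h; rw [h]; norm_num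
  · rename_i h; exact fun e => h e.symm

lemma geomBound (c : ℕ → ℤ) (h1 : ∀ k, c k ≤ 1) :
    ∀ n, (Finset.range n).sum (fun k => c k * 2^(n-k)) + 1 < 2^(n+1) := by
  intro n
  induction n with
  | zero => simp
  | succ n ih =>
    rw [Finset.sum_range_succ]
    have e1 : (Finset.range n).sum (fun k => c k * 2^(n+1-k))
        = 2 * (Finset.range n).sum (fun k => c k * 2^(n-k)) := by
      rw [Finset.mul_sum]
      refine Finset.sum_congr rfl fun k hk => ?_
      have hk' : k < n := Finset.mem_range.mp hk
      have : n + 1 - k = (n - k) + 1 := by omega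
      rw [this, pow_succ]; ring
    rw [e1]
    have h2 : c n * 2^(n+1-n) ≤ 2 := by
      have : n + 1 - n = 1 := by omega
      rw [this]
      have := h1 n
      nlinarith
    have h3 : (2:ℤ)^(n+1+1) = 2 * 2^(n+1) := by ring
    nlinarith [ih]

/-- Floor of an integer divided by a natural, over ℝ. -/
lemma floor_int_div (T : ℤ) (d : ℕ) : ⌊(T:ℝ)/(d:ℝ)⌋ = T / (d:ℤ) := by
  rw [show ((T:ℝ)/(d:ℝ)) = (((T/d : ℚ)) : ℝ) by push_cast; ring, Rat.floor_cast,
    Rat.floor_intCast_div_natCast]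

/-- Key integer identity. -/
lemma key (b : ℕ → ℤ) (hb0 : ∀ j, 0 ≤ b j) (hb1 : ∀ j, b j ≤ 1) (M i : ℕ) (hi : i < M) :
    ((Finset.range M).sum (fun j => b j * 2^(M-j)) + 1) / 2^(M-i)
      = (Finset.range (i+1)).sum (fun j => b j * 2^(i-j)) := by
  have hiM : i + 1 ≤ M := hi
  set S : ℤ := (Finset.range (i+1)).sum (fun j => b j * 2^(i-j)) with hS
  set R : ℤ := (Finset.Ico (i+1) M).sum (fun j => b j * 2^(M-j)) + 1 with hR
  have hsplit : (Finset.range M).sum (fun j => b j * 2^(M-j)) + 1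
      = S * 2^(M-i) + R := by
    rw [hR, hS, Finset.range_eq_Ico, ← Finset.sum_Ico_consecutive _ (Nat.zero_le (i+1)) hiM,
      ← Finset.range_eq_Ico, Finset.sum_mul]
    have : ∀ j ∈ Finset.range (i+1), b j * 2^(i-j) * 2^(M-i) = b j * 2^(M-j) := by
      intro j hj
      have hj' : j < i + 1 := Finset.mem_range.mp hj
      rw [mul_assoc, ← pow_add]
      congr 2
      omega
    rw [Finset.sum_congr rfl this]
    ring
  rw [hsplit]
  have hRnn : 0 ≤ R := by
    rw [hR]
    have : (0:ℤ) ≤ (Finset.Ico (i+1) M).sum (fun j => b j * 2^(M-j)) :=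
      Finset.sum_nonneg fun j _ => mul_nonneg (hb0 j) (by positivity)
    omega
  have hRlt : R < 2^(M-i) := by
    rw [hR, Finset.sum_Ico_eq_sum_range]
    have e : ∀ k ∈ Finset.range (M - (i+1)),
        b (i+1+k) * 2^(M-(i+1+k)) = b (i+1+k) * 2^((M-(i+1))-k) := by
      intro k hk
      congr 2
      omega
    rw [Finset.sum_congr rfl e]
    have := geomBound (fun k => b (i+1+k)) (fun k => hb1 _) (M-(i+1))
    have hexp : (M-(i+1)) + 1 = M - i := by omega
    rw [hexp] at this
    exact this
  have h2 : (0:ℤ) < 2^(M-i) := by positivity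
  rw [add_comm, Int.add_mul_ediv_right _ _ (ne_of_gt h2), Int.ediv_eq_zero_of_lt hRnn hRlt,
    zero_add]

lemma Ssucc (b : ℕ → ℤ) (i : ℕ) :
    (Finset.range (i+1+1)).sum (fun j => b j * 2^(i+1-j))
      = 2 * (Finset.range (i+1)).sum (fun j => b j * 2^(i-j)) + b (i+1) := by
  rw [Finset.sum_range_succ, Finset.mul_sum]
  have : ∀ j ∈ Finset.range (i+1), b j * 2^(i+1-j) = 2 * (b j * 2^(i-j)) := by
    intro j hj
    have hj' : j < i + 1 := Finset.mem_range.mp hj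
    have : i + 1 - j = (i - j) + 1 := by omega
    rw [this, pow_succ]; ring
  rw [Finset.sum_congr rfl this]
  simp

/-- The value of the hidden function at the inputs `2^(i+1)`. -/
lemma fval (b : ℕ → ℤ) (hb0 : ∀ j, 0 ≤ b j) (hb1 : ∀ j, b j ≤ 1) (M i : ℕ) (hi : i < M)
    (T : ℤ) (hT : T = (Finset.range M).sum (fun j => b j * 2^(M-j)) + 1) :
    ⌊(2:ℝ)^(i+1) * ((T:ℝ)/2^(M+1))⌋
      - 2 * ⌊(2:ℝ)^(i+1) * ((T:ℝ)/2^(M+1)) / 2⌋ = b i := by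
  have hTnn : 0 ≤ T := by
    rw [hT]
    have : (0:ℤ) ≤ (Finset.range M).sum (fun j => b j * 2^(M-j)) :=
      Finset.sum_nonneg fun j _ => mul_nonneg (hb0 j) (by positivity)
    omega
  have hfloor : ∀ k, k < M → ⌊(2:ℝ)^(k+1) * ((T:ℝ)/2^(M+1))⌋
      = (Finset.range (k+1)).sum (fun j => b j * 2^(k-j)) := by
    intro k hk
    have e1 : (2:ℝ)^(k+1) * ((T:ℝ)/2^(M+1)) = (T:ℝ)/((2^(M-k):ℕ):ℝ) := by
      have h2 : (2:ℝ)^(M+1) = 2^(k+1) * 2^(M-k) := by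
        rw [← pow_add]; congr 1; omega
      push_cast
      rw [h2]
      have hk1 : ((2:ℝ)^(k+1)) ≠ 0 := by positivity
      have hk2 : ((2:ℝ)^(M-k)) ≠ 0 := by positivity
      field_simp
    rw [e1, floor_int_div]
    have := key b hb0 hb1 M k hk
    rw [hT]
    push_cast
    exact this
  cases i with
  | zero =>
    rw [hfloor 0 hi]
    have e2 : (2:ℝ)^(0+1) * ((T:ℝ)/2^(M+1)) / 2 = (T:ℝ)/2^(M+1) := by ring
    rw [e2]
    have hTlt : T < 2^(M+1) := by rw [hT]; exact geomBound b hb1 M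
    have hfl0 : ⌊(T:ℝ)/2^(M+1)⌋ = 0 := by
      apply Int.floor_eq_zero_iff.mpr
      constructor
      · positivity
      · rw [div_lt_one (by positivity)]
        calc (T:ℝ) < ((2^(M+1) : ℤ) : ℝ) := by exact_mod_cast hTlt
          _ = 2^(M+1) := by push_cast; ring
    rw [hfl0]
    simp
  | succ i' =>
    have hi' : i' < M := by omega
    have e2 : (2:ℝ)^(i'+1+1) * ((T:ℝ)/2^(M+1)) / 2
        = (2:ℝ)^(i'+1) * ((T:ℝ)/2^(M+1)) := by
      rw [pow_succ]; ring
    rw [e2, hfloor (i'+1) hi, hfloor i' hi']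
    have := Ssucc b i'
    omega

/-- The learner makes a mistake in every round. -/
lemma mist (L : List (ℝ × ℤ) → ℝ → ℤ) (f : ℝ → ℤ) :
    ∀ n k, (∀ i, i < k + n → f ((2:ℝ)^(i+1)) = bit L i) →
      n ≤ stdMistakes L f (hist L k) ((List.range n).map fun i => (2:ℝ)^(k+i+1)) := by
  intro n
  induction n with
  | zero => intro k _; simp [stdMistakes]
  | succ n ih =>
    intro k h
    rw [List.range_succ_eq_map, List.map_cons, List.map_map]
    have hfun : ((fun i => (2:ℝ)^(k+i+1)) ∘ Nat.succ) = fun i => (2:ℝ)^((k+1)+i+1) := by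
      funext i
      simp only [Function.comp]
      congr 1
      omega
    rw [hfun]
    simp only [stdMistakes]
    have hk0 : k + 0 + 1 = k + 1 := by omega
    rw [hk0]
    have hfk : f ((2:ℝ)^(k+1)) = bit L k := h k (by omega)
    have hne : ¬ (L (hist L k) ((2:ℝ)^(k+1)) = f ((2:ℝ)^(k+1))) := by
      rw [hfk]
      exact fun e => bit_ne k e.symm
    rw [if_neg hne]
    have hhist : hist L k ++ [((2:ℝ)^(k+1), f ((2:ℝ)^(k+1)))] = hist L (k+1) := by
      rw [hfk]; rfl
    rw [hhist]
    have := ih (k+1) (fun i hi => h i (by omega))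
    omega

end Stmt14Aux

/-- for the family of functions d ↦ ⌊dx⌋ − 2⌊dx/2⌋ (the parity of
⌊dx⌋) for x > 0, every deterministic learner can be forced to make at least M
mistakes on the input sequence 2, 4, 8, …, 2^M, so opt_std(F) = ∞. -/
theorem stmt14 :
    ∀ L : List (ℝ × ℤ) → ℝ → ℤ, ∀ M : ℕ, ∃ x : ℝ, 0 < x ∧
      M ≤ stdMistakes L (fun d => ⌊d * x⌋ - 2 * ⌊d * x / 2⌋) []
        ((List.range M).map fun i => (2 : ℝ) ^ (i + 1)) := by
  intro L M
  set b : ℕ → ℤ := Stmt14Aux.bit L with hb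
  set T : ℤ := (Finset.range M).sum (fun j => b j * 2^(M-j)) + 1 with hT
  have hb0 : ∀ j, 0 ≤ b j := fun j => Stmt14Aux.bit_nonneg j
  have hb1 : ∀ j, b j ≤ 1 := fun j => Stmt14Aux.bit_le_one j
  have hT1 : 1 ≤ T := by
    rw [hT]
    have : (0:ℤ) ≤ (Finset.range M).sum (fun j => b j * 2^(M-j)) :=
      Finset.sum_nonneg fun j _ => mul_nonneg (hb0 j) (by positivity)
    omega
  refine ⟨(T:ℝ)/2^(M+1), ?_, ?_⟩
  · have : (0:ℝ) < (T:ℝ) := by exact_mod_cast lt_of_lt_of_le one_pos hT1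
    positivity
  · have hval : ∀ i, i < 0 + M →
        (fun d => ⌊d * ((T:ℝ)/2^(M+1))⌋ - 2 * ⌊d * ((T:ℝ)/2^(M+1)) / 2⌋) ((2:ℝ)^(i+1))
          = Stmt14Aux.bit L i := by
      intro i hi
      exact Stmt14Aux.fval b hb0 hb1 M i (by omega) T hT
    have := Stmt14Aux.mist L
      (fun d => ⌊d * ((T:ℝ)/2^(M+1))⌋ - 2 * ⌊d * ((T:ℝ)/2^(M+1)) / 2⌋) M 0 hval
    simpa [Stmt14Aux.hist] using this
end

section
/- Let 0 < α < 1, let ReLU_α : ℝ → ℝ be defined by ReLU_α(t) = t for t > 0 and ReLU_α(t) = αt for t ≤ 0, let ε > 0 and c ≥ 0 be real numbers, and define h : ℝ → ℝ by h(x) = (1/((1 − α)ε))·(ReLU_α(x − (c + ε)) + ReLU_α(x + ε) − ReLU_α(x − c) − ReLU_α(x)). Then h(x) = 1 for all x ∈ [0, c], h(x) = 0 for all x ≤ −ε, and h(x) = 0 for all x ≥ c + ε. -/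
/-- the linear combination of four leaky relu activations
h(x) = (1/((1 − α)ε))(ReLU_α(x − (c + ε)) + ReLU_α(x + ε) − ReLU_α(x − c) − ReLU_α(x))
equals 1 on [0, c], equals 0 for x ≤ −ε, and equals 0 for x ≥ c + ε. -/
theorem stmt16 (α : ℝ) (hα0 : 0 < α) (hα1 : α < 1) (ε c : ℝ) (hε : 0 < ε) (hc : 0 ≤ c)
    (reluα : ℝ → ℝ) (hrelu : ∀ t, reluα t = if 0 < t then t else α * t)
    (h : ℝ → ℝ)
    (hh : ∀ x, h x = (1 / ((1 - α) * ε)) *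
      (reluα (x - (c + ε)) + reluα (x + ε) - reluα (x - c) - reluα x)) :
    (∀ x ∈ Set.Icc (0 : ℝ) c, h x = 1) ∧
    (∀ x : ℝ, x ≤ -ε → h x = 0) ∧
    (∀ x : ℝ, c + ε ≤ x → h x = 0) := by
  have h1α : (0:ℝ) < 1 - α := by linarith
  have hne : (1 - α) * ε ≠ 0 := by positivity
  refine ⟨?_, ?_, ?_⟩
  · rintro x ⟨h0, h1⟩
    rw [hh, hrelu, hrelu, hrelu, hrelu,
      if_neg (by push_neg; linarith), if_pos (by linarith), if_neg (by push_neg; linarith)]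
    by_cases hx0 : 0 < x
    · rw [if_pos hx0]; field_simp; ring
    · rw [if_neg hx0]
      push_neg at hx0
      have hx : x = 0 := le_antisymm hx0 h0
      subst hx
      field_simp
      ring
  · intro x hx
    rw [hh, hrelu, hrelu, hrelu, hrelu]
    by_cases hx0 : 0 < x + ε
    · rw [if_neg (by push_neg; linarith), if_pos hx0, if_neg (by push_neg; linarith),
        if_neg (by push_neg; linarith)]
      have hxe : x = -ε := by linarith
      subst hxe
      field_simp
      ring
    · rw [if_neg (by push_neg; linarith), if_neg hx0, if_neg (by push_neg; linarith),
        if_neg (by push_neg; linarith)]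
      ring
  · intro x hx
    rw [hh, hrelu, hrelu, hrelu, hrelu]
    by_cases hx0 : 0 < x - (c + ε)
    · rw [if_pos hx0, if_pos (by linarith), if_pos (by linarith), if_pos (by linarith)]
      ring
    · rw [if_neg hx0, if_pos (by linarith), if_pos (by linarith), if_pos (by linarith)]
      push_neg at hx0
      have hxe : x = c + ε := by linarith
      subst hxe
      field_simp
      ring
end
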